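/- arXiv:2010.11560 — 4 statements merged into one kernel-verified Lean document; each statement's English description precedes it below -/
import Mathlib

section
/- Let f : ℝ^N × W → ℝ^M be the function computed by a feedforward ReLU network of depth c > 1, f = A_c ∘ σ ∘ A_{c−1} ∘ ⋯ ∘ σ ∘ A_1, where each A_l is affine with weights w^l_{jk} and biases b^l_j and σ is the coordinatewise ReLU. Fix a hidden neuron, i.e. a layer index 1 ≤ l < c and a neuron index 1 ≤ j ≤ d_l. Then at every pair (x, w) such that x lies in D(w) (the complement of the union of all decision boundaries {x : u^l_j(x) = 0}), the following differential relation holds: Σ_{k=1}^{d_{l−1}} w^l_{jk} · ∂f/∂w^l_{jk} + b^l_j · ∂f/∂b^l_j − Σ_{i=1}^{d_{l+1}} w^{l+1}_{ij} · ∂f/∂w^{l+1}_{ij} = 0. -/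
/-- Index type for the weights and biases of a feedforward network of depth `c`
with layer widths `d 0, d 1, ..., d c`.  `Sum.inl ⟨l, (j, k)⟩` is the weight
`w^{l+1}_{jk}` from neuron `k` in layer `l` to neuron `j` in layer `l+1`, and
`Sum.inr ⟨l, j⟩` is the bias `b^{l+1}_j`. -/
abbrev NNIdx (c : ℕ) (d : ℕ → ℕ) : Type :=
  (Σ l : Fin c, Fin (d (l.val + 1)) × Fin (d l.val)) ⊕ (Σ l : Fin c, Fin (d (l.val + 1)))

/-- Post-activation values: `act c d θ x l` is the vector of activations of layer `l`
of the feedforward ReLU network (the coordinatewise ReLU `σ(t) = max(t,0)` is applied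
at the hidden layers `1 ≤ l < c`; the output layer `c` is affine with no activation). -/
noncomputable def act (c : ℕ) (d : ℕ → ℕ) (θ : NNIdx c d → ℝ) (x : Fin (d 0) → ℝ) :
    (l : ℕ) → Fin (d l) → ℝ
  | 0 => x
  | l + 1 => fun j =>
      if h : l < c then
        let pre : ℝ := (∑ k : Fin (d l), θ (Sum.inl ⟨⟨l, h⟩, (j, k)⟩) * act c d θ x l k)
            + θ (Sum.inr ⟨⟨l, h⟩, j⟩)
        if l + 1 < c then max pre 0 else pre
      else 0

/-- The function `f(x, θ) = A_c(σ(A_{c-1}(⋯ σ(A_1 x) ⋯)))` computed by the network. -/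
noncomputable def netFun (c : ℕ) (d : ℕ → ℕ) (θ : NNIdx c d → ℝ) (x : Fin (d 0) → ℝ)
    (m : Fin (d c)) : ℝ :=
  act c d θ x c m

/-- Preactivation `u^{l+1}_j` of neuron `j` in layer `l+1`. -/
noncomputable def preact (c : ℕ) (d : ℕ → ℕ) (θ : NNIdx c d → ℝ) (x : Fin (d 0) → ℝ)
    (l : ℕ) (h : l < c) (j : Fin (d (l + 1))) : ℝ :=
  (∑ k : Fin (d l), θ (Sum.inl ⟨⟨l, h⟩, (j, k)⟩) * act c d θ x l k)
    + θ (Sum.inr ⟨⟨l, h⟩, j⟩)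

/-- `D(θ)`: the complement in input space of the union, over all hidden neurons,
of the decision boundaries `{x : u^{l+1}_j(x) = 0}`. -/
def Dset (c : ℕ) (d : ℕ → ℕ) (θ : NNIdx c d → ℝ) : Set (Fin (d 0) → ℝ) :=
  {x | ∀ (l : ℕ) (h : l + 1 < c) (j : Fin (d (l + 1))),
    preact c d θ x l (Nat.lt_of_succ_lt h) j ≠ 0}

/-- Partial derivative of output coordinate `m` of the network with respect to the
single parameter `idx` (all other parameters held fixed). -/
noncomputable def pderivNet (c : ℕ) (d : ℕ → ℕ) (θ : NNIdx c d → ℝ) (x : Fin (d 0) → ℝ)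
    (m : Fin (d c)) (idx : NNIdx c d) : ℝ :=
  deriv (fun s => netFun c d (Function.update θ idx s) x m) (θ idx)


-- relu derivative helper
lemma hasDerivAt_relu_comp {p : ℝ} (hp : p ≠ 0) {F : ℝ → ℝ} {F' s₀ : ℝ}
    (hF : HasDerivAt F F' s₀) (hFs : F s₀ = p) :
    HasDerivAt (fun s => max (F s) 0) ((if 0 < p then 1 else 0) * F') s₀ := by
  rcases hp.lt_or_gt with h | h
  · rw [if_neg (not_lt.2 h.le), zero_mul]
    have hev : (fun s => max (F s) 0) =ᶠ[nhds s₀] (fun _ => (0:ℝ)) := by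
      have h2 : ∀ᶠ s in nhds s₀, F s < 0 :=
        hF.continuousAt.eventually_lt_const (by rw [hFs]; exact h)
      filter_upwards [h2] with s hs
      exact max_eq_right hs.le
    exact (hasDerivAt_const s₀ (0:ℝ)).congr_of_eventuallyEq hev
  · rw [if_pos h, one_mul]
    have hev : (fun s => max (F s) 0) =ᶠ[nhds s₀] F := by
      have h2 : ∀ᶠ s in nhds s₀, 0 < F s :=
        hF.continuousAt.eventually_const_lt (by rw [hFs]; exact h)
      filter_upwards [h2] with s hs
      exact max_eq_left hs.le
    exact hF.congr_of_eventuallyEq hev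

/-- Forward-propagation step matrix. -/
noncomputable def stepMat (c : ℕ) (d : ℕ → ℕ) (θ : NNIdx c d → ℝ) (x : Fin (d 0) → ℝ)
    (n : ℕ) (i : Fin (d (n + 1))) (jj : Fin (d n)) : ℝ :=
  if h : n < c then
    (if n + 1 < c then (if 0 < preact c d θ x n h i then 1 else 0) else 1) *
      θ (Sum.inl ⟨⟨n, h⟩, (i, jj)⟩)
  else 0

/-- Forward tangent propagation from layer `L` to layer `L + t`. -/
noncomputable def fwdV (c : ℕ) (d : ℕ → ℕ) (θ : NNIdx c d → ℝ) (x : Fin (d 0) → ℝ)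
    (L : ℕ) (v : Fin (d L) → ℝ) : (t : ℕ) → Fin (d (L + t)) → ℝ
  | 0 => v
  | t + 1 => fun i => ∑ jj : Fin (d (L + t)), stepMat c d θ x (L + t) i jj * fwdV c d θ x L v t jj

lemma fwdV_linc {c : ℕ} {d : ℕ → ℕ} {θ : NNIdx c d → ℝ} {x : Fin (d 0) → ℝ} {L : ℕ}
    {ι : Type*} [Fintype ι] (a : ι → ℝ) (V : ι → Fin (d L) → ℝ) (t : ℕ) :
    fwdV c d θ x L (fun jj => ∑ p : ι, a p * V p jj) t
      = fun i => ∑ p : ι, a p * fwdV c d θ x L (V p) t i := by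
  induction t with
  | zero => rfl
  | succ t ih =>
    funext i
    show (∑ jj : Fin (d (L + t)), stepMat c d θ x (L + t) i jj *
        fwdV c d θ x L (fun jj => ∑ p : ι, a p * V p jj) t jj) = _
    rw [ih]
    simp only [fwdV, Finset.mul_sum]
    rw [Finset.sum_comm]
    congr 1; funext jj; congr 1; funext p; ring

lemma fwdV_zero {c : ℕ} {d : ℕ → ℕ} {θ : NNIdx c d → ℝ} {x : Fin (d 0) → ℝ} {L : ℕ} (t : ℕ) :
    fwdV c d θ x L (fun _ => (0:ℝ)) t = fun _ => (0:ℝ) := by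
  induction t with
  | zero => rfl
  | succ t ih =>
    funext i
    show (∑ jj : Fin (d (L + t)), stepMat c d θ x (L + t) i jj *
        fwdV c d θ x L (fun _ => (0:ℝ)) t jj) = 0
    rw [ih]
    simp

/-- The key single-layer differentiation step. -/
lemma step_hasDerivAt (c : ℕ) (d : ℕ → ℕ) (θ : NNIdx c d → ℝ) (x : Fin (d 0) → ℝ)
    (hx : x ∈ Dset c d θ) (g : ℝ → NNIdx c d → ℝ) (s₀ : ℝ) (hg0 : g s₀ = θ)
    (n : ℕ) (hn : n < c)
    (hgW : ∀ s (i : Fin (d (n+1))) (jj : Fin (d n)),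
      g s (Sum.inl ⟨⟨n, hn⟩, (i, jj)⟩) = θ (Sum.inl ⟨⟨n, hn⟩, (i, jj)⟩))
    (hgB : ∀ s (i : Fin (d (n+1))), g s (Sum.inr ⟨⟨n, hn⟩, i⟩) = θ (Sum.inr ⟨⟨n, hn⟩, i⟩))
    (v : Fin (d n) → ℝ)
    (hv : ∀ jj, HasDerivAt (fun s => act c d (g s) x n jj) (v jj) s₀)
    (i : Fin (d (n+1))) :
    HasDerivAt (fun s => act c d (g s) x (n+1) i)
      (∑ jj : Fin (d n), stepMat c d θ x n i jj * v jj) s₀ := by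
  have hpre : HasDerivAt
      (fun s => (∑ jj : Fin (d n), g s (Sum.inl ⟨⟨n, hn⟩, (i, jj)⟩) * act c d (g s) x n jj)
        + g s (Sum.inr ⟨⟨n, hn⟩, i⟩))
      (∑ jj : Fin (d n), θ (Sum.inl ⟨⟨n, hn⟩, (i, jj)⟩) * v jj) s₀ := by
    have : HasDerivAt
        (fun s => (∑ jj : Fin (d n), θ (Sum.inl ⟨⟨n, hn⟩, (i, jj)⟩) * act c d (g s) x n jj)
          + θ (Sum.inr ⟨⟨n, hn⟩, i⟩))
        (∑ jj : Fin (d n), θ (Sum.inl ⟨⟨n, hn⟩, (i, jj)⟩) * v jj) s₀ := by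
      exact (HasDerivAt.fun_sum (fun jj _ => (hv jj).const_mul _)).add_const _
    apply this.congr_of_eventuallyEq
    apply Filter.Eventually.of_forall
    intro s
    simp only [hgW, hgB]
  have hpre0 : ((∑ jj : Fin (d n), g s₀ (Sum.inl ⟨⟨n, hn⟩, (i, jj)⟩) * act c d (g s₀) x n jj)
        + g s₀ (Sum.inr ⟨⟨n, hn⟩, i⟩)) = preact c d θ x n hn i := by
    rw [hg0]; rfl
  have hact : ∀ s, act c d (g s) x (n+1) i =
      (if n + 1 < c then
        max ((∑ jj : Fin (d n), g s (Sum.inl ⟨⟨n, hn⟩, (i, jj)⟩) * act c d (g s) x n jj)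
          + g s (Sum.inr ⟨⟨n, hn⟩, i⟩)) 0
      else ((∑ jj : Fin (d n), g s (Sum.inl ⟨⟨n, hn⟩, (i, jj)⟩) * act c d (g s) x n jj)
          + g s (Sum.inr ⟨⟨n, hn⟩, i⟩))) := by
    intro s
    simp only [act, dif_pos hn]
  have hstep : ∀ jj, stepMat c d θ x n i jj =
      (if n + 1 < c then (if 0 < preact c d θ x n hn i then 1 else 0) else 1)
        * θ (Sum.inl ⟨⟨n, hn⟩, (i, jj)⟩) := by
    intro jj; simp only [stepMat, dif_pos hn]
  by_cases hnc : n + 1 < c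
  · have hne : preact c d θ x n hn i ≠ 0 := by
      have := hx n hnc i
      convert this using 2
    have := hasDerivAt_relu_comp hne hpre hpre0
    apply HasDerivAt.congr_deriv
    · exact this.congr_of_eventuallyEq (Filter.Eventually.of_forall fun s => by
        simp only [hact s, if_pos hnc])
    · simp only [hstep, if_pos hnc, Finset.mul_sum]
      congr 1; funext jj; ring
  · apply HasDerivAt.congr_deriv
    · exact hpre.congr_of_eventuallyEq (Filter.Eventually.of_forall fun s => by
        simp only [hact s, if_neg hnc])
    · simp only [hstep, if_neg hnc, one_mul]

def idxLayer {c : ℕ} {d : ℕ → ℕ} : NNIdx c d → ℕ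
  | Sum.inl ⟨l, _⟩ => l.val
  | Sum.inr ⟨l, _⟩ => l.val

lemma prop_hasDerivAt (c : ℕ) (d : ℕ → ℕ) (θ : NNIdx c d → ℝ) (x : Fin (d 0) → ℝ)
    (hx : x ∈ Dset c d θ) (g : ℝ → NNIdx c d → ℝ) (s₀ : ℝ) (hg0 : g s₀ = θ)
    (L : ℕ)
    (hgfix : ∀ s (idx : NNIdx c d), L ≤ idxLayer idx → g s idx = θ idx)
    (v : Fin (d L) → ℝ)
    (hv : ∀ jj, HasDerivAt (fun s => act c d (g s) x L jj) (v jj) s₀) :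
    ∀ t, L + t ≤ c → ∀ i, HasDerivAt (fun s => act c d (g s) x (L + t) i)
      (fwdV c d θ x L v t i) s₀ := by
  intro t
  induction t with
  | zero => intro _ i; exact hv i
  | succ t ih =>
    intro ht i
    have hn : L + t < c := Nat.lt_of_succ_le ht
    have ih' := ih (Nat.le_of_succ_le ht)
    exact step_hasDerivAt c d θ x hx g s₀ hg0 (L + t) hn
      (fun s i jj => hgfix s _ (Nat.le_add_right L t))
      (fun s i => hgfix s _ (Nat.le_add_right L t))
      (fwdV c d θ x L v t) ih' i

lemma act_update_low {c : ℕ} {d : ℕ → ℕ} (θ : NNIdx c d → ℝ) (x : Fin (d 0) → ℝ)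
    (idx : NNIdx c d) (s : ℝ) :
    ∀ n, n ≤ idxLayer idx → act c d (Function.update θ idx s) x n = act c d θ x n := by
  intro n
  induction n with
  | zero => intro _; rfl
  | succ n ih =>
    intro hn
    have hn' : n < idxLayer idx := hn
    funext i
    simp only [act]
    by_cases h : n < c
    · rw [dif_pos h, dif_pos h, ih (Nat.le_of_lt hn')]
      have hW : ∀ jj : Fin (d n), Function.update θ idx s (Sum.inl ⟨⟨n, h⟩, (i, jj)⟩)
          = θ (Sum.inl ⟨⟨n, h⟩, (i, jj)⟩) := by
        intro jj
        apply Function.update_of_ne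
        intro heq
        subst heq
        simp [idxLayer] at hn'
      have hB : Function.update θ idx s (Sum.inr ⟨⟨n, h⟩, i⟩) = θ (Sum.inr ⟨⟨n, h⟩, i⟩) := by
        apply Function.update_of_ne
        intro heq
        subst heq
        simp [idxLayer] at hn'
      simp only [hW, hB]
    · rw [dif_neg h, dif_neg h]

lemma update_ne_layer {c : ℕ} {d : ℕ → ℕ} (θ : NNIdx c d → ℝ) (idx idx' : NNIdx c d) (s : ℝ)
    (h : idxLayer idx' ≠ idxLayer idx) : Function.update θ idx s idx' = θ idx' :=
  Function.update_of_ne (fun he => h (by rw [he])) _ _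

lemma idxLayer_inl {c : ℕ} {d : ℕ → ℕ} {n : ℕ} {hn : n < c} {i : Fin (d (n+1))} {k : Fin (d n)} :
    idxLayer (Sum.inl ⟨⟨n, hn⟩, (i, k)⟩ : NNIdx c d) = n := rfl

lemma idxLayer_inr {c : ℕ} {d : ℕ → ℕ} {n : ℕ} {hn : n < c} {i : Fin (d (n+1))} :
    idxLayer (Sum.inr ⟨⟨n, hn⟩, i⟩ : NNIdx c d) = n := rfl

/-- Derivative of layer `n+1` activations w.r.t. a single weight into that layer. -/
lemma base_w (c : ℕ) (d : ℕ → ℕ) (θ : NNIdx c d → ℝ) (x : Fin (d 0) → ℝ)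
    (n : ℕ) (hn : n < c) (i : Fin (d (n+1))) (k : Fin (d n))
    (hne : n + 1 < c → preact c d θ x n hn i ≠ 0) (i' : Fin (d (n+1))) :
    HasDerivAt
      (fun s => act c d (Function.update θ (Sum.inl ⟨⟨n, hn⟩, (i, k)⟩) s) x (n+1) i')
      (if i' = i then
        (if n + 1 < c then (if 0 < preact c d θ x n hn i' then 1 else 0) else 1)
          * act c d θ x n k
       else 0)
      (θ (Sum.inl ⟨⟨n, hn⟩, (i, k)⟩)) := by
  set idx : NNIdx c d := Sum.inl ⟨⟨n, hn⟩, (i, k)⟩ with hidx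
  have hlow : ∀ s, act c d (Function.update θ idx s) x n = act c d θ x n := by
    intro s; exact act_update_low θ x idx s n (le_refl n)
  have hact : ∀ s, act c d (Function.update θ idx s) x (n+1) i' =
      (if n + 1 < c then
        max ((∑ k' : Fin (d n), Function.update θ idx s (Sum.inl ⟨⟨n, hn⟩, (i', k')⟩)
            * act c d θ x n k') + Function.update θ idx s (Sum.inr ⟨⟨n, hn⟩, i'⟩)) 0
      else ((∑ k' : Fin (d n), Function.update θ idx s (Sum.inl ⟨⟨n, hn⟩, (i', k')⟩)
            * act c d θ x n k') + Function.update θ idx s (Sum.inr ⟨⟨n, hn⟩, i'⟩))) := by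
    intro s
    simp only [act, dif_pos hn, hlow s]
  have hbias : ∀ s, Function.update θ idx s (Sum.inr ⟨⟨n, hn⟩, i'⟩)
      = θ (Sum.inr ⟨⟨n, hn⟩, i'⟩) := by
    intro s; exact Function.update_of_ne (by simp [hidx]) _ _
  by_cases hji : i' = i
  · subst hji
    rw [if_pos rfl]
    have hW : ∀ s (k' : Fin (d n)), Function.update θ idx s (Sum.inl ⟨⟨n, hn⟩, (i', k')⟩)
        = if k' = k then s else θ (Sum.inl ⟨⟨n, hn⟩, (i', k')⟩) := by
      intro s k'
      by_cases hk : k' = k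
      · subst hk; simp [hidx]
      · rw [if_neg hk]
        refine Function.update_of_ne (fun he => hk ?_) _ _
        simpa [hidx] using he
    have hpre : HasDerivAt
        (fun s => (∑ k' : Fin (d n), Function.update θ idx s (Sum.inl ⟨⟨n, hn⟩, (i', k')⟩)
            * act c d θ x n k') + Function.update θ idx s (Sum.inr ⟨⟨n, hn⟩, i'⟩))
        (act c d θ x n k) (θ (Sum.inl ⟨⟨n, hn⟩, (i', k)⟩)) := by
      have hsum : HasDerivAt
          (fun s => (∑ k' : Fin (d n), (if k' = k then s else θ (Sum.inl ⟨⟨n, hn⟩, (i', k')⟩))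
              * act c d θ x n k'))
          (∑ k' : Fin (d n), (if k' = k then act c d θ x n k else 0))
          (θ (Sum.inl ⟨⟨n, hn⟩, (i', k)⟩)) := by
        apply HasDerivAt.fun_sum
        intro k' _
        by_cases hk : k' = k
        · subst hk
          simp only [if_pos rfl]
          exact hasDerivAt_mul_const _
        · simp only [if_neg hk]
          exact hasDerivAt_const _ _
      rw [Finset.sum_ite_eq' Finset.univ k (fun _ => act c d θ x n k)] at hsum
      simp only [Finset.mem_univ, if_pos] at hsum
      have := hsum.add_const (θ (Sum.inr ⟨⟨n, hn⟩, i'⟩))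
      apply this.congr_of_eventuallyEq
      apply Filter.Eventually.of_forall
      intro s
      simp only [hW s, hbias s]
    have hpre0 : ((∑ k' : Fin (d n), Function.update θ idx (θ idx) (Sum.inl ⟨⟨n, hn⟩, (i', k')⟩)
        * act c d θ x n k') + Function.update θ idx (θ idx) (Sum.inr ⟨⟨n, hn⟩, i'⟩))
        = preact c d θ x n hn i' := by
      rw [Function.update_eq_self]; rfl
    by_cases hc2 : n + 1 < c
    · rw [if_pos hc2]
      have hne' := hne hc2
      have := hasDerivAt_relu_comp hne' hpre hpre0
      apply HasDerivAt.congr_deriv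
      · exact this.congr_of_eventuallyEq (Filter.Eventually.of_forall fun s => by
          simp only [hact s, if_pos hc2])
      · rfl
    · rw [if_neg hc2, one_mul]
      exact hpre.congr_of_eventuallyEq (Filter.Eventually.of_forall fun s => by
        simp only [hact s, if_neg hc2])
  · rw [if_neg hji]
    have hW : ∀ s (k' : Fin (d n)), Function.update θ idx s (Sum.inl ⟨⟨n, hn⟩, (i', k')⟩)
        = θ (Sum.inl ⟨⟨n, hn⟩, (i', k')⟩) := by
      intro s k'
      refine Function.update_of_ne (fun he => hji ?_) _ _
      exact (by simpa [hidx] using he : i' = i ∧ k' = k).1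
    have : ∀ s, act c d (Function.update θ idx s) x (n+1) i'
        = act c d (Function.update θ idx (θ idx)) x (n+1) i' := by
      intro s
      rw [hact s, hact (θ idx)]
      simp only [hW, hbias]
    exact (hasDerivAt_const _ _).congr_of_eventuallyEq
      (Filter.Eventually.of_forall fun s => this s)

/-- Derivative of layer `n+1` activations w.r.t. the bias of a neuron in that layer. -/
lemma base_b (c : ℕ) (d : ℕ → ℕ) (θ : NNIdx c d → ℝ) (x : Fin (d 0) → ℝ)
    (n : ℕ) (hn : n < c) (i : Fin (d (n+1)))
    (hne : n + 1 < c → preact c d θ x n hn i ≠ 0) (i' : Fin (d (n+1))) :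
    HasDerivAt
      (fun s => act c d (Function.update θ (Sum.inr ⟨⟨n, hn⟩, i⟩) s) x (n+1) i')
      (if i' = i then
        (if n + 1 < c then (if 0 < preact c d θ x n hn i' then 1 else 0) else 1)
       else 0)
      (θ (Sum.inr ⟨⟨n, hn⟩, i⟩)) := by
  set idx : NNIdx c d := Sum.inr ⟨⟨n, hn⟩, i⟩ with hidx
  have hlow : ∀ s, act c d (Function.update θ idx s) x n = act c d θ x n := by
    intro s; exact act_update_low θ x idx s n (le_refl n)
  have hact : ∀ s, act c d (Function.update θ idx s) x (n+1) i' =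
      (if n + 1 < c then
        max ((∑ k' : Fin (d n), Function.update θ idx s (Sum.inl ⟨⟨n, hn⟩, (i', k')⟩)
            * act c d θ x n k') + Function.update θ idx s (Sum.inr ⟨⟨n, hn⟩, i'⟩)) 0
      else ((∑ k' : Fin (d n), Function.update θ idx s (Sum.inl ⟨⟨n, hn⟩, (i', k')⟩)
            * act c d θ x n k') + Function.update θ idx s (Sum.inr ⟨⟨n, hn⟩, i'⟩))) := by
    intro s
    simp only [act, dif_pos hn, hlow s]
  have hW : ∀ s (k' : Fin (d n)), Function.update θ idx s (Sum.inl ⟨⟨n, hn⟩, (i', k')⟩)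
      = θ (Sum.inl ⟨⟨n, hn⟩, (i', k')⟩) := by
    intro s k'; exact Function.update_of_ne (by simp [hidx]) _ _
  by_cases hji : i' = i
  · subst hji
    rw [if_pos rfl]
    have hB : ∀ s, Function.update θ idx s (Sum.inr ⟨⟨n, hn⟩, i'⟩) = s := by
      intro s; simp [hidx]
    have hpre : HasDerivAt
        (fun s => (∑ k' : Fin (d n), Function.update θ idx s (Sum.inl ⟨⟨n, hn⟩, (i', k')⟩)
            * act c d θ x n k') + Function.update θ idx s (Sum.inr ⟨⟨n, hn⟩, i'⟩))
        1 (θ idx) := by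
      have : HasDerivAt (fun s : ℝ =>
          (∑ k' : Fin (d n), θ (Sum.inl ⟨⟨n, hn⟩, (i', k')⟩) * act c d θ x n k') + s)
          1 (θ idx) := (hasDerivAt_id _).const_add _
      apply this.congr_of_eventuallyEq
      apply Filter.Eventually.of_forall
      intro s
      simp only [hW s, hB s]
    have hpre0 : ((∑ k' : Fin (d n), Function.update θ idx (θ idx) (Sum.inl ⟨⟨n, hn⟩, (i', k')⟩)
        * act c d θ x n k') + Function.update θ idx (θ idx) (Sum.inr ⟨⟨n, hn⟩, i'⟩))
        = preact c d θ x n hn i' := by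
      rw [Function.update_eq_self]; rfl
    by_cases hc2 : n + 1 < c
    · rw [if_pos hc2]
      have := hasDerivAt_relu_comp (hne hc2) hpre hpre0
      apply HasDerivAt.congr_deriv
      · exact this.congr_of_eventuallyEq (Filter.Eventually.of_forall fun s => by
          simp only [hact s, if_pos hc2])
      · rw [mul_one]
    · rw [if_neg hc2]
      exact hpre.congr_of_eventuallyEq (Filter.Eventually.of_forall fun s => by
        simp only [hact s, if_neg hc2])
  · rw [if_neg hji]
    have hB : ∀ s, Function.update θ idx s (Sum.inr ⟨⟨n, hn⟩, i'⟩)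
        = θ (Sum.inr ⟨⟨n, hn⟩, i'⟩) := by
      intro s
      refine Function.update_of_ne (fun he => hji ?_) _ _
      simpa [hidx] using he
    have : ∀ s, act c d (Function.update θ idx s) x (n+1) i'
        = act c d (Function.update θ idx (θ idx)) x (n+1) i' := by
      intro s
      rw [hact s, hact (θ idx)]
      simp only [hW, hB]
    exact (hasDerivAt_const _ _).congr_of_eventuallyEq
      (Filter.Eventually.of_forall fun s => this s)

lemma fwdV_add {c : ℕ} {d : ℕ → ℕ} {θ : NNIdx c d → ℝ} {x : Fin (d 0) → ℝ} {L : ℕ}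
    (v w : Fin (d L) → ℝ) (t : ℕ) :
    fwdV c d θ x L (fun jj => v jj + w jj) t
      = fun i => fwdV c d θ x L v t i + fwdV c d θ x L w t i := by
  induction t with
  | zero => rfl
  | succ t ih =>
    funext i
    show (∑ jj : Fin (d (L + t)), stepMat c d θ x (L + t) i jj *
        fwdV c d θ x L (fun jj => v jj + w jj) t jj) = _
    rw [ih]
    simp [mul_add, Finset.sum_add_distrib, fwdV]

lemma fwdV_smul {c : ℕ} {d : ℕ → ℕ} {θ : NNIdx c d → ℝ} {x : Fin (d 0) → ℝ} {L : ℕ}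
    (r : ℝ) (v : Fin (d L) → ℝ) (t : ℕ) :
    fwdV c d θ x L (fun jj => r * v jj) t = fun i => r * fwdV c d θ x L v t i := by
  induction t with
  | zero => rfl
  | succ t ih =>
    funext i
    show (∑ jj : Fin (d (L + t)), stepMat c d θ x (L + t) i jj *
        fwdV c d θ x L (fun jj => r * v jj) t jj) = _
    rw [ih]
    simp only [fwdV, Finset.mul_sum]
    congr 1; funext jj; ring

lemma fwdV_sub {c : ℕ} {d : ℕ → ℕ} {θ : NNIdx c d → ℝ} {x : Fin (d 0) → ℝ} {L : ℕ}
    (v w : Fin (d L) → ℝ) (t : ℕ) :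
    fwdV c d θ x L (fun jj => v jj - w jj) t
      = fun i => fwdV c d θ x L v t i - fwdV c d θ x L w t i := by
  induction t with
  | zero => rfl
  | succ t ih =>
    funext i
    show (∑ jj : Fin (d (L + t)), stepMat c d θ x (L + t) i jj *
        fwdV c d θ x L (fun jj => v jj - w jj) t jj) = _
    rw [ih]
    simp only [fwdV, mul_sub, Finset.sum_sub_distrib]

/-- For a feedforward ReLU network of depth `c > 1` and any hidden neuron `(l+1, j)`
(so `1 ≤ l+1 < c`), at every `(x, θ)` with `x ∈ D(θ)` the differential relation
`Σ_k w^{l+1}_{jk} ∂f/∂w^{l+1}_{jk} + b^{l+1}_j ∂f/∂b^{l+1}_j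
  − Σ_i w^{l+2}_{ij} ∂f/∂w^{l+2}_{ij} = 0` holds. -/
theorem relu_differential_relation
    (c : ℕ) (hc : 1 < c) (d : ℕ → ℕ) (θ : NNIdx c d → ℝ)
    (l : ℕ) (hl : l + 1 < c) (j : Fin (d (l + 1)))
    (x : Fin (d 0) → ℝ) (hx : x ∈ Dset c d θ) (m : Fin (d c)) :
    (∑ k : Fin (d l),
        θ (Sum.inl ⟨⟨l, Nat.lt_of_succ_lt hl⟩, (j, k)⟩) *
          pderivNet c d θ x m (Sum.inl ⟨⟨l, Nat.lt_of_succ_lt hl⟩, (j, k)⟩))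
      + θ (Sum.inr ⟨⟨l, Nat.lt_of_succ_lt hl⟩, j⟩) *
          pderivNet c d θ x m (Sum.inr ⟨⟨l, Nat.lt_of_succ_lt hl⟩, j⟩)
      - ∑ i : Fin (d (l + 1 + 1)),
          θ (Sum.inl ⟨⟨l + 1, hl⟩, (i, j)⟩) *
            pderivNet c d θ x m (Sum.inl ⟨⟨l + 1, hl⟩, (i, j)⟩) = 0 := by
  obtain ⟨T, hT⟩ : ∃ t, c = l + 1 + 1 + t := ⟨c - (l + 1 + 1), by omega⟩
  subst hT
  -- seed vectors at layer l+1 (for the incoming weights and bias)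
  set v1 : Fin (d l) → Fin (d (l + 1)) → ℝ := fun k j' =>
    if j' = j then
      (if 0 < preact (l + 1 + 1 + T) d θ x l (Nat.lt_of_succ_lt hl) j' then 1 else 0)
        * act (l + 1 + 1 + T) d θ x l k
    else 0 with hv1
  set v2 : Fin (d (l + 1)) → ℝ := fun j' =>
    if j' = j then
      (if 0 < preact (l + 1 + 1 + T) d θ x l (Nat.lt_of_succ_lt hl) j' then 1 else 0)
    else 0 with hv2
  -- seed vectors at layer l+2
  set W1 : Fin (d l) → Fin (d (l + 1 + 1)) → ℝ := fun k i' =>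
    ∑ jj : Fin (d (l + 1)), stepMat (l + 1 + 1 + T) d θ x (l + 1) i' jj * v1 k jj with hW1
  set W2 : Fin (d (l + 1 + 1)) → ℝ := fun i' =>
    ∑ jj : Fin (d (l + 1)), stepMat (l + 1 + 1 + T) d θ x (l + 1) i' jj * v2 jj with hW2
  set v3 : Fin (d (l + 1 + 1)) → Fin (d (l + 1 + 1)) → ℝ := fun i i' =>
    if i' = i then
      (if l + 1 + 1 < l + 1 + 1 + T then
        (if 0 < preact (l + 1 + 1 + T) d θ x (l + 1) hl i' then 1 else 0) else 1)
        * act (l + 1 + 1 + T) d θ x (l + 1) j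
    else 0 with hv3
  -- derivative computations
  have D1 : ∀ k : Fin (d l),
      pderivNet (l + 1 + 1 + T) d θ x m (Sum.inl ⟨⟨l, Nat.lt_of_succ_lt hl⟩, (j, k)⟩)
        = fwdV (l + 1 + 1 + T) d θ x (l + 1 + 1) (W1 k) T m := by
    intro k
    set idx : NNIdx (l + 1 + 1 + T) d := Sum.inl ⟨⟨l, Nat.lt_of_succ_lt hl⟩, (j, k)⟩ with hidx
    have base : ∀ j', HasDerivAt
        (fun s => act (l + 1 + 1 + T) d (Function.update θ idx s) x (l + 1) j')
        (v1 k j') (θ idx) := by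
      intro j'
      have h := base_w (l + 1 + 1 + T) d θ x l (Nat.lt_of_succ_lt hl) j k
        (fun _ => hx l hl j) j'
      rwa [if_pos hl] at h
    have hstep : ∀ i', HasDerivAt
        (fun s => act (l + 1 + 1 + T) d (Function.update θ idx s) x (l + 1 + 1) i')
        (W1 k i') (θ idx) := by
      intro i'
      exact step_hasDerivAt (l + 1 + 1 + T) d θ x hx (fun s => Function.update θ idx s) (θ idx)
        (Function.update_eq_self idx θ) (l + 1) hl
        (fun s i jj => update_ne_layer θ idx _ s (by simp [idxLayer, hidx]))
        (fun s i => update_ne_layer θ idx _ s (by simp [idxLayer, hidx]))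
        (v1 k) base i'
    have hfin := prop_hasDerivAt (l + 1 + 1 + T) d θ x hx
      (fun s => Function.update θ idx s) (θ idx)
      (Function.update_eq_self idx θ) (l + 1 + 1)
      (fun s idx' h => update_ne_layer θ idx idx' s (by rw [hidx, idxLayer_inl]; omega))
      (W1 k) hstep T (le_refl _) m
    exact hfin.deriv
  have D2 :
      pderivNet (l + 1 + 1 + T) d θ x m (Sum.inr ⟨⟨l, Nat.lt_of_succ_lt hl⟩, j⟩)
        = fwdV (l + 1 + 1 + T) d θ x (l + 1 + 1) W2 T m := by
    set idx : NNIdx (l + 1 + 1 + T) d := Sum.inr ⟨⟨l, Nat.lt_of_succ_lt hl⟩, j⟩ with hidx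
    have base : ∀ j', HasDerivAt
        (fun s => act (l + 1 + 1 + T) d (Function.update θ idx s) x (l + 1) j')
        (v2 j') (θ idx) := by
      intro j'
      have h := base_b (l + 1 + 1 + T) d θ x l (Nat.lt_of_succ_lt hl) j
        (fun _ => hx l hl j) j'
      rwa [if_pos hl] at h
    have hstep : ∀ i', HasDerivAt
        (fun s => act (l + 1 + 1 + T) d (Function.update θ idx s) x (l + 1 + 1) i')
        (W2 i') (θ idx) := by
      intro i'
      exact step_hasDerivAt (l + 1 + 1 + T) d θ x hx (fun s => Function.update θ idx s) (θ idx)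
        (Function.update_eq_self idx θ) (l + 1) hl
        (fun s i jj => update_ne_layer θ idx _ s (by simp [idxLayer, hidx]))
        (fun s i => update_ne_layer θ idx _ s (by simp [idxLayer, hidx]))
        v2 base i'
    have hfin := prop_hasDerivAt (l + 1 + 1 + T) d θ x hx
      (fun s => Function.update θ idx s) (θ idx)
      (Function.update_eq_self idx θ) (l + 1 + 1)
      (fun s idx' h => update_ne_layer θ idx idx' s (by rw [hidx, idxLayer_inr]; omega))
      W2 hstep T (le_refl _) m
    exact hfin.deriv
  have D3 : ∀ i : Fin (d (l + 1 + 1)),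
      pderivNet (l + 1 + 1 + T) d θ x m (Sum.inl ⟨⟨l + 1, hl⟩, (i, j)⟩)
        = fwdV (l + 1 + 1 + T) d θ x (l + 1 + 1) (v3 i) T m := by
    intro i
    set idx : NNIdx (l + 1 + 1 + T) d := Sum.inl ⟨⟨l + 1, hl⟩, (i, j)⟩ with hidx
    have base : ∀ i', HasDerivAt
        (fun s => act (l + 1 + 1 + T) d (Function.update θ idx s) x (l + 1 + 1) i')
        (v3 i i') (θ idx) := by
      intro i'
      exact base_w (l + 1 + 1 + T) d θ x (l + 1) hl i j (fun h2 => hx (l + 1) h2 i) i'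
    have hfin := prop_hasDerivAt (l + 1 + 1 + T) d θ x hx
      (fun s => Function.update θ idx s) (θ idx)
      (Function.update_eq_self idx θ) (l + 1 + 1)
      (fun s idx' h => update_ne_layer θ idx idx' s (by rw [hidx, idxLayer_inl]; omega))
      (v3 i) base T (le_refl _) m
    exact hfin.deriv
  -- rewrite the goal using the computed derivatives
  have r1 : (∑ k : Fin (d l), θ (Sum.inl ⟨⟨l, Nat.lt_of_succ_lt hl⟩, (j, k)⟩) *
        pderivNet (l + 1 + 1 + T) d θ x m (Sum.inl ⟨⟨l, Nat.lt_of_succ_lt hl⟩, (j, k)⟩))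
      = ∑ k : Fin (d l), θ (Sum.inl ⟨⟨l, Nat.lt_of_succ_lt hl⟩, (j, k)⟩) *
        fwdV (l + 1 + 1 + T) d θ x (l + 1 + 1) (W1 k) T m :=
    Finset.sum_congr rfl (fun k _ => by rw [D1 k])
  have r3 : (∑ i : Fin (d (l + 1 + 1)), θ (Sum.inl ⟨⟨l + 1, hl⟩, (i, j)⟩) *
        pderivNet (l + 1 + 1 + T) d θ x m (Sum.inl ⟨⟨l + 1, hl⟩, (i, j)⟩))
      = ∑ i : Fin (d (l + 1 + 1)), θ (Sum.inl ⟨⟨l + 1, hl⟩, (i, j)⟩) *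
        fwdV (l + 1 + 1 + T) d θ x (l + 1 + 1) (v3 i) T m :=
    Finset.sum_congr rfl (fun i _ => by rw [D3 i])
  rw [r1, D2, r3]
  -- linearity of forward propagation
  have step1 : (∑ k : Fin (d l), θ (Sum.inl ⟨⟨l, Nat.lt_of_succ_lt hl⟩, (j, k)⟩) *
        fwdV (l + 1 + 1 + T) d θ x (l + 1 + 1) (W1 k) T m)
      = fwdV (l + 1 + 1 + T) d θ x (l + 1 + 1)
          (fun jj => ∑ k : Fin (d l), θ (Sum.inl ⟨⟨l, Nat.lt_of_succ_lt hl⟩, (j, k)⟩)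
            * W1 k jj) T m :=
    (congrFun (fwdV_linc _ _ T) m).symm
  have step2 : θ (Sum.inr ⟨⟨l, Nat.lt_of_succ_lt hl⟩, j⟩) *
        fwdV (l + 1 + 1 + T) d θ x (l + 1 + 1) W2 T m
      = fwdV (l + 1 + 1 + T) d θ x (l + 1 + 1)
          (fun jj => θ (Sum.inr ⟨⟨l, Nat.lt_of_succ_lt hl⟩, j⟩) * W2 jj) T m :=
    (congrFun (fwdV_smul _ _ T) m).symm
  have step3 : (∑ i : Fin (d (l + 1 + 1)), θ (Sum.inl ⟨⟨l + 1, hl⟩, (i, j)⟩) *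
        fwdV (l + 1 + 1 + T) d θ x (l + 1 + 1) (v3 i) T m)
      = fwdV (l + 1 + 1 + T) d θ x (l + 1 + 1)
          (fun jj => ∑ i : Fin (d (l + 1 + 1)), θ (Sum.inl ⟨⟨l + 1, hl⟩, (i, j)⟩)
            * v3 i jj) T m :=
    (congrFun (fwdV_linc _ _ T) m).symm
  rw [step1, step2, step3]
  have step4 : fwdV (l + 1 + 1 + T) d θ x (l + 1 + 1)
          (fun jj => ∑ k : Fin (d l), θ (Sum.inl ⟨⟨l, Nat.lt_of_succ_lt hl⟩, (j, k)⟩)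
            * W1 k jj) T m
      + fwdV (l + 1 + 1 + T) d θ x (l + 1 + 1)
          (fun jj => θ (Sum.inr ⟨⟨l, Nat.lt_of_succ_lt hl⟩, j⟩) * W2 jj) T m
      = fwdV (l + 1 + 1 + T) d θ x (l + 1 + 1)
          (fun jj => (∑ k : Fin (d l), θ (Sum.inl ⟨⟨l, Nat.lt_of_succ_lt hl⟩, (j, k)⟩)
              * W1 k jj)
            + θ (Sum.inr ⟨⟨l, Nat.lt_of_succ_lt hl⟩, j⟩) * W2 jj) T m :=
    (congrFun (fwdV_add _ _ T) m).symm
  rw [step4]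
  have step5 : fwdV (l + 1 + 1 + T) d θ x (l + 1 + 1)
          (fun jj => (∑ k : Fin (d l), θ (Sum.inl ⟨⟨l, Nat.lt_of_succ_lt hl⟩, (j, k)⟩)
              * W1 k jj)
            + θ (Sum.inr ⟨⟨l, Nat.lt_of_succ_lt hl⟩, j⟩) * W2 jj) T m
      - fwdV (l + 1 + 1 + T) d θ x (l + 1 + 1)
          (fun jj => ∑ i : Fin (d (l + 1 + 1)), θ (Sum.inl ⟨⟨l + 1, hl⟩, (i, j)⟩)
            * v3 i jj) T m
      = fwdV (l + 1 + 1 + T) d θ x (l + 1 + 1)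
          (fun jj => ((∑ k : Fin (d l), θ (Sum.inl ⟨⟨l, Nat.lt_of_succ_lt hl⟩, (j, k)⟩)
              * W1 k jj)
            + θ (Sum.inr ⟨⟨l, Nat.lt_of_succ_lt hl⟩, j⟩) * W2 jj)
            - ∑ i : Fin (d (l + 1 + 1)), θ (Sum.inl ⟨⟨l + 1, hl⟩, (i, j)⟩) * v3 i jj) T m :=
    (congrFun (fwdV_sub _ _ T) m).symm
  rw [step5]
  -- the combined tangent seed vanishes
  have hstep' : ∀ i' : Fin (d (l + 1 + 1)),
      stepMat (l + 1 + 1 + T) d θ x (l + 1) i' j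
        = (if l + 1 + 1 < l + 1 + 1 + T then
            (if 0 < preact (l + 1 + 1 + T) d θ x (l + 1) hl i' then 1 else 0) else 1)
          * θ (Sum.inl ⟨⟨l + 1, hl⟩, (i', j)⟩) := by
    intro i'
    simp only [stepMat]
    rw [dif_pos hl]
  have haj : act (l + 1 + 1 + T) d θ x (l + 1) j
      = max (preact (l + 1 + 1 + T) d θ x l (Nat.lt_of_succ_lt hl) j) 0 := by
    show act (l + 1 + 1 + T) d θ x (l + 1) j = _
    simp only [act]
    rw [dif_pos (Nat.lt_of_succ_lt hl), if_pos hl]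
    rfl
  have hu : (if 0 < preact (l + 1 + 1 + T) d θ x l (Nat.lt_of_succ_lt hl) j then (1:ℝ) else 0)
      * preact (l + 1 + 1 + T) d θ x l (Nat.lt_of_succ_lt hl) j
      = act (l + 1 + 1 + T) d θ x (l + 1) j := by
    rcases (hx l hl j).lt_or_gt with h | h
    · rw [if_neg (not_lt.2 h.le), zero_mul, haj, max_eq_right h.le]
    · rw [if_pos h, one_mul, haj, max_eq_left h.le]
  have hpre : preact (l + 1 + 1 + T) d θ x l (Nat.lt_of_succ_lt hl) j
      = (∑ k : Fin (d l), θ (Sum.inl ⟨⟨l, Nat.lt_of_succ_lt hl⟩, (j, k)⟩)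
          * act (l + 1 + 1 + T) d θ x l k)
        + θ (Sum.inr ⟨⟨l, Nat.lt_of_succ_lt hl⟩, j⟩) := rfl
  have E : (fun jj => ((∑ k : Fin (d l), θ (Sum.inl ⟨⟨l, Nat.lt_of_succ_lt hl⟩, (j, k)⟩)
              * W1 k jj)
            + θ (Sum.inr ⟨⟨l, Nat.lt_of_succ_lt hl⟩, j⟩) * W2 jj)
            - ∑ i : Fin (d (l + 1 + 1)), θ (Sum.inl ⟨⟨l + 1, hl⟩, (i, j)⟩) * v3 i jj)
      = fun _ => (0:ℝ) := by
    funext i'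
    simp only [hW1, hW2, hv1, hv2, hv3, mul_ite, mul_zero, mul_one,
      Finset.sum_ite_eq', Finset.sum_ite_eq, Finset.mem_univ, if_true]
    rw [hstep' i']
    rcases (hx l hl j).lt_or_gt with hneg | hpos
    · rw [haj, max_eq_right hneg.le]
      simp only [if_neg (not_lt.2 hneg.le), zero_mul, mul_zero, if_neg, Finset.sum_const_zero]
      simp
    · rw [haj, max_eq_left hpos.le]
      simp only [if_pos hpos, one_mul, mul_one]
      set F : ℝ := (if l + 1 + 1 < l + 1 + 1 + T then
          (if 0 < preact (l + 1 + 1 + T) d θ x (l + 1) hl i' then (1:ℝ) else 0) else 1) with hF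
      rw [show (∑ k : Fin (d l), θ (Sum.inl ⟨⟨l, Nat.lt_of_succ_lt hl⟩, (j, k)⟩) *
            (F * θ (Sum.inl ⟨⟨l + 1, hl⟩, (i', j)⟩) * act (l + 1 + 1 + T) d θ x l k))
          = F * θ (Sum.inl ⟨⟨l + 1, hl⟩, (i', j)⟩) *
            ∑ k : Fin (d l), θ (Sum.inl ⟨⟨l, Nat.lt_of_succ_lt hl⟩, (j, k)⟩)
              * act (l + 1 + 1 + T) d θ x l k
          from by rw [Finset.mul_sum]; exact Finset.sum_congr rfl fun k _ => by ring]
      rw [hpre]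
      ring
  rw [E, fwdV_zero]
end

section
/- Let f : ℝ^N × W → ℝ^M be the function computed by a feedforward ReLU network of depth c > 1 and let p(y|x,w) = (2π)^{−M/2} exp(−½‖y − f(x,w)‖²) be the associated Gaussian regression model, with input distribution q(x) such that the Fisher information integrals exist. If w ∈ W has at least one weight or bias at a hidden node nonzero, then the Fisher information matrix I(w), with entries I(w)_{ij} = ∫∫ ∂_{w_i}[log p(y|x,w)] ∂_{w_j}[log p(y|x,w)] p(y|x,w) q(x) dy dx, is degenerate, i.e. there exists a nonzero vector v ∈ ℝ^д with I(w) v = 0. -/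
open MeasureTheory

/-- The Gaussian regression model
`p(y|x,θ) = (2π)^{-M/2} exp(-½ ‖y - f(x,θ)‖²)` associated to the network, `M = d c`. -/
noncomputable def modelPdf (c : ℕ) (d : ℕ → ℕ) (θ : NNIdx c d → ℝ)
    (x : Fin (d 0) → ℝ) (y : Fin (d c) → ℝ) : ℝ :=
  (2 * Real.pi) ^ (-(d c : ℝ) / 2) *
    Real.exp (-(1 / 2) * ∑ m : Fin (d c), (y m - netFun c d θ x m) ^ 2)

/-- `∂_{θ idx} log p(y|x,θ)`. -/
noncomputable def dlogp (c : ℕ) (d : ℕ → ℕ) (θ : NNIdx c d → ℝ)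
    (x : Fin (d 0) → ℝ) (y : Fin (d c) → ℝ) (idx : NNIdx c d) : ℝ :=
  deriv (fun s => Real.log (modelPdf c d (Function.update θ idx s) x y)) (θ idx)

/-- Fisher information matrix
`I(θ)_{ij} = ∫∫ ∂_i[log p] ∂_j[log p] p(y|x,θ) q(x) dy dx`. -/
noncomputable def fisher (c : ℕ) (d : ℕ → ℕ) (θ : NNIdx c d → ℝ)
    (q : (Fin (d 0) → ℝ) → ℝ) (i j : NNIdx c d) : ℝ :=
  ∫ x : Fin (d 0) → ℝ,
    (∫ y : Fin (d c) → ℝ,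
      dlogp c d θ x y i * dlogp c d θ x y j * modelPdf c d θ x y) * q x

/-! ### Auxiliary lemmas -/


lemma deriv_comp_affine (f : ℝ → ℝ) (α β s : ℝ) :
    deriv (fun t => f (α * t + β)) s = α * deriv f (α * s + β) := by
  rcases eq_or_ne α 0 with h | h
  · simp [h]
  by_cases hd : DifferentiableAt ℝ f (α * s + β)
  · have h1 : HasDerivAt (fun t : ℝ => α * t + β) α s := by
      simpa using ((hasDerivAt_id s).const_mul α).add_const β
    have := (hd.hasDerivAt.comp s h1).deriv
    rw [show (fun t => f (α * t + β)) = f ∘ (fun t : ℝ => α * t + β) from rfl, this]; ring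
  · have h2 : ¬ DifferentiableAt ℝ (fun t => f (α * t + β)) s := by
      intro hcomp
      apply hd
      have hin : DifferentiableAt ℝ (fun u : ℝ => (u - β) / α) (α * s + β) := by fun_prop
      have h3 := DifferentiableAt.comp (𝕜 := ℝ)
        (g := fun t => f (α * t + β)) (f := fun u : ℝ => (u - β) / α)
        (α * s + β) (show DifferentiableAt ℝ _ ((α * s + β - β) / α) by
          rw [show (α * s + β - β) / α = s from by field_simp; ring]; exact hcomp) hin
      have he : ((fun t => f (α * t + β)) ∘ (fun u : ℝ => (u - β) / α)) = f := by
        funext u; simp only [Function.comp_apply]; congr 1; field_simp; ring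
      rwa [he] at h3
    rw [deriv_zero_of_not_differentiableAt h2, deriv_zero_of_not_differentiableAt hd]
    ring

def nnLayer {c : ℕ} {d : ℕ → ℕ} : NNIdx c d → ℕ
  | .inl ⟨l, _⟩ => l.val
  | .inr ⟨l, _⟩ => l.val

lemma act_congr (c : ℕ) (d : ℕ → ℕ) (θ₁ θ₂ : NNIdx c d → ℝ) (x : Fin (d 0) → ℝ) (l : ℕ)
    (h : ∀ idx : NNIdx c d, nnLayer idx < l → θ₁ idx = θ₂ idx) :
    act c d θ₁ x l = act c d θ₂ x l := by
  induction l with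
  | zero => rfl
  | succ l ih =>
    funext j
    have hih := ih (fun idx hidx => h idx (Nat.lt_succ_of_lt hidx))
    simp only [act]
    split
    · next hl =>
      have hsum : (∑ k : Fin (d l), θ₁ (Sum.inl ⟨⟨l, hl⟩, (j, k)⟩) * act c d θ₁ x l k)
            + θ₁ (Sum.inr ⟨⟨l, hl⟩, j⟩)
          = (∑ k : Fin (d l), θ₂ (Sum.inl ⟨⟨l, hl⟩, (j, k)⟩) * act c d θ₂ x l k)
            + θ₂ (Sum.inr ⟨⟨l, hl⟩, j⟩) := by
        rw [hih, h (Sum.inr ⟨⟨l, hl⟩, j⟩) (by simp [nnLayer])]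
        refine congrArg (· + _) (Finset.sum_congr rfl fun k _ => ?_)
        rw [h (Sum.inl ⟨⟨l, hl⟩, (j, k)⟩) (by simp [nnLayer])]
      simp only [hsum]
    · rfl

lemma act_update (c : ℕ) (d : ℕ → ℕ) (θ : NNIdx c d → ℝ) (x : Fin (d 0) → ℝ)
    (idx : NNIdx c d) (s : ℝ) (l : ℕ) (h : l ≤ nnLayer idx) :
    act c d (Function.update θ idx s) x l = act c d θ x l := by
  apply act_congr
  intro i hi
  apply Function.update_of_ne
  intro he; subst he; omega

lemma act_top (n : ℕ) (d : ℕ → ℕ) (θ : NNIdx (n+2) d → ℝ) (x : Fin (d 0) → ℝ)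
    (hn1 : n + 1 < n + 2) (m : Fin (d (n+2))) :
    act (n+2) d θ x (n+2) m =
      (∑ j' : Fin (d (n+1)), θ (Sum.inl ⟨⟨n+1, hn1⟩, (m, j')⟩) * act (n+2) d θ x (n+1) j')
        + θ (Sum.inr ⟨⟨n+1, hn1⟩, m⟩) := by
  simp only [act]
  rw [dif_pos (by omega : n+1 < n+2)]
  simp only [if_neg (by omega : ¬ (n+1+1 < n+2))]

lemma act_hidden (n : ℕ) (d : ℕ → ℕ) (θ : NNIdx (n+2) d → ℝ) (x : Fin (d 0) → ℝ)
    (hn : n < n + 2) (j : Fin (d (n+1))) :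
    act (n+2) d θ x (n+1) j =
      max ((∑ k : Fin (d n), θ (Sum.inl ⟨⟨n, hn⟩, (j, k)⟩) * act (n+2) d θ x n k)
        + θ (Sum.inr ⟨⟨n, hn⟩, j⟩)) 0 := by
  simp only [act]
  rw [dif_pos (by omega : n < n+2)]
  simp only [if_pos (by omega : n+1 < n+2)]

lemma log_modelPdf (c : ℕ) (d : ℕ → ℕ) (θ : NNIdx c d → ℝ) (x : Fin (d 0) → ℝ)
    (y : Fin (d c) → ℝ) :
    Real.log (modelPdf c d θ x y) = Real.log ((2 * Real.pi) ^ (-(d c : ℝ) / 2))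
      + (-(1 / 2) * ∑ m : Fin (d c), (y m - netFun c d θ x m) ^ 2) := by
  rw [modelPdf, Real.log_mul (ne_of_gt (Real.rpow_pos_of_pos (by positivity) _))
    (Real.exp_ne_zero _), Real.log_exp]

lemma dlogp_eq (c : ℕ) (d : ℕ → ℕ) (θ : NNIdx c d → ℝ) (x : Fin (d 0) → ℝ)
    (y : Fin (d c) → ℝ) (idx : NNIdx c d) :
    dlogp c d θ x y idx =
      deriv (fun s => -(1 / 2) *
        ∑ m : Fin (d c), (y m - netFun c d (Function.update θ idx s) x m) ^ 2) (θ idx) := by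
  unfold dlogp
  have h : (fun s => Real.log (modelPdf c d (Function.update θ idx s) x y))
      = fun s => Real.log ((2 * Real.pi) ^ (-(d c : ℝ) / 2))
        + (-(1 / 2) * ∑ m : Fin (d c), (y m - netFun c d (Function.update θ idx s) x m) ^ 2) :=
    funext fun s => log_modelPdf c d _ x y
  rw [h, deriv_const_add]

lemma sum_if_update {ι : Type*} [Fintype ι] [DecidableEq ι] (u a : ι → ℝ) (k : ι) (s : ℝ) :
    ∑ k' : ι, (if k' = k then s else u k') * a k'
      = ((∑ k' : ι, u k' * a k') - u k * a k) + s * a k := by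
  have h : ∀ k' : ι, (if k' = k then s else u k') * a k'
      = u k' * a k' + (if k' = k then s * a k' - u k' * a k' else 0) := by
    intro k'
    by_cases hk : k' = k
    · subst hk; simp
    · simp [hk]
  rw [Finset.sum_congr rfl fun k' _ => h k', Finset.sum_add_distrib,
    Finset.sum_ite_eq' Finset.univ k (fun k' => s * a k' - u k' * a k')]
  simp only [Finset.mem_univ, if_pos]
  ring

section Key
variable (n : ℕ) (d : ℕ → ℕ) (θ : NNIdx (n+2) d → ℝ) (x : Fin (d 0) → ℝ)
  (y : Fin (d (n+2)) → ℝ)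

lemma key_pointwise (hn : n < n + 2) (hn1 : n + 1 < n + 2) (j : Fin (d (n+1))) :
    (∑ k : Fin (d n), θ (Sum.inl ⟨⟨n, hn⟩, (j, k)⟩)
        * dlogp (n+2) d θ x y (Sum.inl ⟨⟨n, hn⟩, (j, k)⟩))
      + θ (Sum.inr ⟨⟨n, hn⟩, j⟩) * dlogp (n+2) d θ x y (Sum.inr ⟨⟨n, hn⟩, j⟩)
      - ∑ m : Fin (d (n+2)), θ (Sum.inl ⟨⟨n+1, hn1⟩, (m, j)⟩)
        * dlogp (n+2) d θ x y (Sum.inl ⟨⟨n+1, hn1⟩, (m, j)⟩) = 0 := by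
  classical
  set inW : Fin (d n) → NNIdx (n+2) d := fun k => Sum.inl ⟨⟨n, hn⟩, (j, k)⟩ with hinW
  set bI : NNIdx (n+2) d := Sum.inr ⟨⟨n, hn⟩, j⟩ with hbI
  set outW : Fin (d (n+2)) → NNIdx (n+2) d := fun m => Sum.inl ⟨⟨n+1, hn1⟩, (m, j)⟩ with houtW
  set a : Fin (d n) → ℝ := act (n+2) d θ x n with ha
  set ζ : ℝ := (∑ k : Fin (d n), θ (inW k) * a k) + θ bI with hζdef
  set z : ℝ := max ζ 0 with hzdef
  set C : Fin (d (n+2)) → ℝ := fun m =>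
    (∑ j' ∈ Finset.univ.erase j, θ (Sum.inl ⟨⟨n+1, hn1⟩, (m, j')⟩) * act (n+2) d θ x (n+1) j')
      + θ (Sum.inr ⟨⟨n+1, hn1⟩, m⟩) with hC
  set Φ : ℝ → ℝ := fun t =>
    -(1/2) * ∑ m : Fin (d (n+2)), (y m - (C m + θ (outW m) * t)) ^ 2 with hΦ
  set ρ : ℝ → ℝ := fun t => Φ (max t 0) with hρ
  -- activation of neuron j
  have hactz : act (n+2) d θ x (n+1) j = z := by rw [act_hidden n d θ x hn j]
  -- generic decomposition of the network output
  have hdecomp : ∀ θ' : NNIdx (n+2) d → ℝ,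
      (∀ (m : Fin (d (n+2))) (j' : Fin (d (n+1))),
        θ' (Sum.inl ⟨⟨n+1, hn1⟩, (m, j')⟩) = θ (Sum.inl ⟨⟨n+1, hn1⟩, (m, j')⟩)) →
      (∀ m : Fin (d (n+2)), θ' (Sum.inr ⟨⟨n+1, hn1⟩, m⟩) = θ (Sum.inr ⟨⟨n+1, hn1⟩, m⟩)) →
      (∀ j' : Fin (d (n+1)), j' ≠ j →
        act (n+2) d θ' x (n+1) j' = act (n+2) d θ x (n+1) j') →
      ∀ m : Fin (d (n+2)), netFun (n+2) d θ' x m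
        = C m + θ (outW m) * act (n+2) d θ' x (n+1) j := by
    intro θ' h1 h2 h3 m
    show act (n+2) d θ' x (n+2) m = _
    rw [act_top n d θ' x hn1 m,
      ← Finset.add_sum_erase _ _ (Finset.mem_univ j)]
    have he : ∑ j' ∈ Finset.univ.erase j,
          θ' (Sum.inl ⟨⟨n+1, hn1⟩, (m, j')⟩) * act (n+2) d θ' x (n+1) j'
        = ∑ j' ∈ Finset.univ.erase j,
          θ (Sum.inl ⟨⟨n+1, hn1⟩, (m, j')⟩) * act (n+2) d θ x (n+1) j' :=
      Finset.sum_congr rfl fun j' hj' => by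
        rw [h1, h3 j' (Finset.ne_of_mem_erase hj')]
    rw [he, h1, h2, hC]
    ring
  -- the network output for θ itself
  have hnetθ : ∀ m, netFun (n+2) d θ x m = C m + θ (outW m) * z := by
    intro m
    rw [hdecomp θ (fun _ _ => rfl) (fun _ => rfl) (fun _ _ => rfl) m, hactz]
  -- activations of other neurons unchanged for in-layer updates
  have hoth : ∀ (idx : NNIdx (n+2) d) (s : ℝ), (idx = bI ∨ ∃ k, idx = inW k) →
      ∀ j' : Fin (d (n+1)), j' ≠ j →
      act (n+2) d (Function.update θ idx s) x (n+1) j' = act (n+2) d θ x (n+1) j' := by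
    intro idx s hidx j' hj'
    rw [act_hidden n d _ x hn j', act_hidden n d θ x hn j']
    have hn' : act (n+2) d (Function.update θ idx s) x n = act (n+2) d θ x n := by
      apply act_update
      rcases hidx with h | ⟨k, h⟩ <;> subst h <;> simp [nnLayer, hbI, hinW]
    rw [hn']
    have hcoef : ∀ k' : Fin (d n),
        Function.update θ idx s (Sum.inl ⟨⟨n, hn⟩, (j', k')⟩)
          = θ (Sum.inl ⟨⟨n, hn⟩, (j', k')⟩) := by
      intro k'
      apply Function.update_of_ne
      rcases hidx with h | ⟨k, h⟩ <;> subst h <;> simp [hbI, hinW, hj']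
    have hbias : Function.update θ idx s (Sum.inr ⟨⟨n, hn⟩, j'⟩)
        = θ (Sum.inr ⟨⟨n, hn⟩, j'⟩) := by
      apply Function.update_of_ne
      rcases hidx with h | ⟨k, h⟩ <;> subst h <;> simp [hbI, hinW, hj']
    rw [hbias, Finset.sum_congr rfl fun k' _ => by rw [hcoef k']]
  -- top-layer coefficients unchanged for in-layer updates
  have htop : ∀ (idx : NNIdx (n+2) d) (s : ℝ), (idx = bI ∨ ∃ k, idx = inW k) →
      (∀ (m : Fin (d (n+2))) (j' : Fin (d (n+1))),
        Function.update θ idx s (Sum.inl ⟨⟨n+1, hn1⟩, (m, j')⟩)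
          = θ (Sum.inl ⟨⟨n+1, hn1⟩, (m, j')⟩)) ∧
      (∀ m : Fin (d (n+2)), Function.update θ idx s (Sum.inr ⟨⟨n+1, hn1⟩, m⟩)
          = θ (Sum.inr ⟨⟨n+1, hn1⟩, m⟩)) := by
    intro idx s hidx
    constructor
    · intro m j'
      apply Function.update_of_ne
      rcases hidx with h | ⟨k, h⟩ <;> subst h <;> simp [hbI, hinW, Fin.ext_iff]
    · intro m
      apply Function.update_of_ne
      rcases hidx with h | ⟨k, h⟩ <;> subst h <;> simp [hbI, hinW, Fin.ext_iff]
  -- network output under in-weight update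
  have hnet_in : ∀ (k : Fin (d n)) (s : ℝ) (m : Fin (d (n+2))),
      netFun (n+2) d (Function.update θ (inW k) s) x m
        = C m + θ (outW m) * max (a k * s + (ζ - a k * θ (inW k))) 0 := by
    intro k s m
    rw [hdecomp (Function.update θ (inW k) s)
      (htop (inW k) s (Or.inr ⟨k, rfl⟩)).1 (htop (inW k) s (Or.inr ⟨k, rfl⟩)).2
      (hoth (inW k) s (Or.inr ⟨k, rfl⟩))]
    congr 2
    rw [act_hidden n d _ x hn j]
    have hn' : act (n+2) d (Function.update θ (inW k) s) x n = act (n+2) d θ x n :=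
      act_update _ _ _ _ _ _ _ (by simp [nnLayer, hinW])
    rw [hn']
    have hcoef : ∀ k' : Fin (d n),
        Function.update θ (inW k) s (Sum.inl ⟨⟨n, hn⟩, (j, k')⟩)
          = if k' = k then s else θ (inW k') := by
      intro k'
      by_cases hk : k' = k
      · subst hk; simp [hinW]
      · rw [if_neg hk]
        apply Function.update_of_ne
        simp [hinW, hk]
    rw [Finset.sum_congr rfl fun k' _ => by rw [hcoef k'],
      sum_if_update (fun k' => θ (inW k')) (fun k' => act (n+2) d θ x n k') k s,
      Function.update_of_ne (by simp [hinW]) _ θ]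
    congr 1
    rw [hζdef, ha]
    ring
  -- network output under bias update
  have hnet_b : ∀ (s : ℝ) (m : Fin (d (n+2))),
      netFun (n+2) d (Function.update θ bI s) x m
        = C m + θ (outW m) * max (1 * s + (ζ - θ bI)) 0 := by
    intro s m
    rw [hdecomp (Function.update θ bI s)
      (htop bI s (Or.inl rfl)).1 (htop bI s (Or.inl rfl)).2 (hoth bI s (Or.inl rfl))]
    congr 2
    rw [act_hidden n d _ x hn j]
    have hn' : act (n+2) d (Function.update θ bI s) x n = act (n+2) d θ x n :=
      act_update _ _ _ _ _ _ _ (by simp [nnLayer, hbI])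
    rw [hn']
    have hcoef : ∀ k' : Fin (d n),
        Function.update θ bI s (Sum.inl ⟨⟨n, hn⟩, (j, k')⟩) = θ (inW k') := fun k' =>
      Function.update_of_ne (by simp [hbI]) _ θ
    rw [Finset.sum_congr rfl fun k' _ => by rw [hcoef k'], Function.update_self]
    congr 1
    rw [hζdef]
    ring
  -- network output under out-weight update
  have hnet_out : ∀ (m₀ : Fin (d (n+2))) (s : ℝ) (m : Fin (d (n+2))),
      netFun (n+2) d (Function.update θ (outW m₀) s) x m
        = if m = m₀ then C m + s * z else netFun (n+2) d θ x m := by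
    intro m₀ s m
    have hact1 : act (n+2) d (Function.update θ (outW m₀) s) x (n+1)
        = act (n+2) d θ x (n+1) :=
      act_update _ _ _ _ _ _ _ (by simp [nnLayer, houtW])
    show act (n+2) d _ x (n+2) m = _
    rw [act_top n d _ x hn1 m, hact1]
    by_cases hm : m = m₀
    · subst hm
      rw [if_pos rfl]
      have hcoef : ∀ j' : Fin (d (n+1)),
          Function.update θ (outW m) s (Sum.inl ⟨⟨n+1, hn1⟩, (m, j')⟩)
            = if j' = j then s else θ (Sum.inl ⟨⟨n+1, hn1⟩, (m, j')⟩) := by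
        intro j'
        by_cases hj : j' = j
        · subst hj; simp [houtW]
        · rw [if_neg hj]
          apply Function.update_of_ne
          simp [houtW, hj]
      rw [Finset.sum_congr rfl fun j' _ => by rw [hcoef j'],
        sum_if_update (fun j' => θ (Sum.inl ⟨⟨n+1, hn1⟩, (m, j')⟩))
          (fun j' => act (n+2) d θ x (n+1) j') j s,
        Function.update_of_ne (by simp [houtW]) _ θ,
        ← Finset.add_sum_erase _ (fun j' => θ (Sum.inl ⟨⟨n+1, hn1⟩, (m, j')⟩)
          * act (n+2) d θ x (n+1) j') (Finset.mem_univ j), hactz, hC]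
      ring
    · rw [if_neg hm]
      have hcoef : ∀ j' : Fin (d (n+1)),
          Function.update θ (outW m₀) s (Sum.inl ⟨⟨n+1, hn1⟩, (m, j')⟩)
            = θ (Sum.inl ⟨⟨n+1, hn1⟩, (m, j')⟩) := fun j' =>
        Function.update_of_ne (by simp [houtW, hm]) _ θ
      rw [Finset.sum_congr rfl fun j' _ => by rw [hcoef j'],
        Function.update_of_ne (by simp [houtW]) _ θ]
      exact (act_top n d θ x hn1 m).symm
  -- derivative formulas
  have hd_in : ∀ k : Fin (d n),
      dlogp (n+2) d θ x y (inW k) = a k * deriv ρ ζ := by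
    intro k
    rw [dlogp_eq]
    have hfn : (fun s => -(1/2 : ℝ) * ∑ m : Fin (d (n+2)),
          (y m - netFun (n+2) d (Function.update θ (inW k) s) x m) ^ 2)
        = fun s => ρ (a k * s + (ζ - a k * θ (inW k))) := by
      funext s
      rw [hρ, hΦ]
      simp only [hnet_in k s]
    rw [hfn, deriv_comp_affine ρ (a k) _ (θ (inW k)),
      show a k * θ (inW k) + (ζ - a k * θ (inW k)) = ζ from by ring]
  have hd_b : dlogp (n+2) d θ x y bI = deriv ρ ζ := by
    rw [dlogp_eq]
    have hfn : (fun s => -(1/2 : ℝ) * ∑ m : Fin (d (n+2)),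
          (y m - netFun (n+2) d (Function.update θ bI s) x m) ^ 2)
        = fun s => ρ (1 * s + (ζ - θ bI)) := by
      funext s
      rw [hρ, hΦ]
      simp only [hnet_b s]
    rw [hfn, deriv_comp_affine ρ 1 _ (θ bI),
      show 1 * θ bI + (ζ - θ bI) = ζ from by ring, one_mul]
  have hd_out : ∀ m₀ : Fin (d (n+2)),
      dlogp (n+2) d θ x y (outW m₀) = z * (y m₀ - C m₀ - θ (outW m₀) * z) := by
    intro m₀
    rw [dlogp_eq]
    have hfn : (fun s => -(1/2 : ℝ) * ∑ m : Fin (d (n+2)),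
          (y m - netFun (n+2) d (Function.update θ (outW m₀) s) x m) ^ 2)
        = fun s => -(1/2 : ℝ) * ((y m₀ - (C m₀ + s * z)) ^ 2
            + ∑ m ∈ Finset.univ.erase m₀, (y m - netFun (n+2) d θ x m) ^ 2) := by
      funext s
      rw [← Finset.add_sum_erase _
        (fun m => (y m - netFun (n+2) d (Function.update θ (outW m₀) s) x m) ^ 2)
        (Finset.mem_univ m₀)]
      rw [hnet_out m₀ s m₀, if_pos rfl]
      congr 1
      refine congrArg _ (Finset.sum_congr rfl fun m hm => ?_)
      rw [hnet_out m₀ s m, if_neg (Finset.ne_of_mem_erase hm)]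
    rw [hfn]
    have h1 : HasDerivAt (fun s : ℝ => y m₀ - (C m₀ + s * z)) (-z) (θ (outW m₀)) := by
      simpa using (((hasDerivAt_id (θ (outW m₀))).mul_const z).const_add (C m₀)).const_sub (y m₀)
    have h3 := ((h1.fun_pow 2).add_const
      (∑ m ∈ Finset.univ.erase m₀, (y m - netFun (n+2) d θ x m) ^ 2)).const_mul (-(1/2 : ℝ))
    rw [h3.deriv]
    ring
  -- assemble
  rw [Finset.sum_congr rfl fun (k : Fin (d n)) _ => by rw [hd_in k], hd_b,
    Finset.sum_congr rfl fun (m : Fin (d (n+2))) _ => by rw [hd_out m]]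
  have hsum1 : ∑ k : Fin (d n), θ (inW k) * (a k * deriv ρ ζ)
      = (∑ k : Fin (d n), θ (inW k) * a k) * deriv ρ ζ := by
    rw [Finset.sum_mul]
    exact Finset.sum_congr rfl fun k _ => by ring
  have hsum2 : ∑ m : Fin (d (n+2)), θ (outW m) * (z * (y m - C m - θ (outW m) * z))
      = z * ∑ m : Fin (d (n+2)), θ (outW m) * (y m - C m - θ (outW m) * z) := by
    rw [Finset.mul_sum]
    exact Finset.sum_congr rfl fun m _ => by ring
  rw [hsum1, hsum2]
  rw [show (∑ k : Fin (d n), θ (inW k) * a k) * deriv ρ ζ + θ bI * deriv ρ ζ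
    = ζ * deriv ρ ζ from by rw [hζdef]; ring]
  rcases lt_trichotomy ζ 0 with hζ | hζ | hζ
  · have hz : z = 0 := max_eq_right hζ.le
    have hD : deriv ρ ζ = 0 := by
      have hev : ρ =ᶠ[nhds ζ] (fun _ => Φ 0) := by
        filter_upwards [Iio_mem_nhds hζ] with t ht
        rw [hρ]
        simp only [max_eq_right (le_of_lt (Set.mem_Iio.mp ht))]
      rw [hev.deriv_eq, deriv_const]
    rw [hD, hz]
    ring
  · have hz : z = 0 := by rw [hzdef, hζ]; simp
    rw [hζ, hz]
    ring
  · have hz : z = ζ := max_eq_left hζ.le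
    have hΦd : HasDerivAt Φ (-(1/2 : ℝ) * ∑ m : Fin (d (n+2)),
        (2 * (y m - (C m + θ (outW m) * ζ)) ^ 1 * (-(θ (outW m) * 1)))) ζ := by
      apply HasDerivAt.const_mul
      apply HasDerivAt.fun_sum
      intro m _
      exact ((((hasDerivAt_id ζ).const_mul (θ (outW m))).const_add (C m)).const_sub (y m)).fun_pow 2
    have hD : deriv ρ ζ = -(1/2 : ℝ) * ∑ m : Fin (d (n+2)),
        (2 * (y m - (C m + θ (outW m) * ζ)) ^ 1 * (-(θ (outW m) * 1))) := by
      have hev : ρ =ᶠ[nhds ζ] Φ := by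
        filter_upwards [Ioi_mem_nhds hζ] with t ht
        rw [hρ]
        simp only [max_eq_left (le_of_lt (Set.mem_Ioi.mp ht))]
      rw [hev.deriv_eq, hΦd.deriv]
    have hS : -(1/2 : ℝ) * ∑ m : Fin (d (n+2)),
          (2 * (y m - (C m + θ (outW m) * ζ)) ^ 1 * (-(θ (outW m) * 1)))
        = ∑ m : Fin (d (n+2)), θ (outW m) * (y m - C m - θ (outW m) * ζ) := by
      rw [Finset.mul_sum]
      exact Finset.sum_congr rfl fun m _ => by ring
    rw [hz, hD, hS]
    ring

end Key

lemma fisher_combo (c : ℕ) (d : ℕ → ℕ) (θ : NNIdx c d → ℝ)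
    (q : (Fin (d 0) → ℝ) → ℝ)
    (hInt_inner : ∀ (i j : NNIdx c d) (x : Fin (d 0) → ℝ),
      Integrable (fun y : Fin (d c) → ℝ =>
        dlogp c d θ x y i * dlogp c d θ x y j * modelPdf c d θ x y))
    (hInt_outer : ∀ i j : NNIdx c d,
      Integrable (fun x : Fin (d 0) → ℝ =>
        (∫ y : Fin (d c) → ℝ,
          dlogp c d θ x y i * dlogp c d θ x y j * modelPdf c d θ x y) * q x))
    (w : NNIdx c d → ℝ)
    (hw : ∀ (x : Fin (d 0) → ℝ) (y : Fin (d c) → ℝ),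
      ∑ j : NNIdx c d, w j * dlogp c d θ x y j = 0)
    (i : NNIdx c d) :
    ∑ j : NNIdx c d, fisher c d θ q i j * w j = 0 := by
  classical
  have key : ∀ x : Fin (d 0) → ℝ,
      ∑ j : NNIdx c d, (∫ y : Fin (d c) → ℝ,
        dlogp c d θ x y i * dlogp c d θ x y j * modelPdf c d θ x y) * w j = 0 := by
    intro x
    have h1 : ∀ j : NNIdx c d, (∫ y : Fin (d c) → ℝ,
          dlogp c d θ x y i * dlogp c d θ x y j * modelPdf c d θ x y) * w j
        = ∫ y : Fin (d c) → ℝ,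
          (dlogp c d θ x y i * dlogp c d θ x y j * modelPdf c d θ x y) * w j :=
      fun j => (integral_mul_const (w j) _).symm
    rw [Finset.sum_congr rfl fun j _ => h1 j,
      ← integral_finset_sum Finset.univ (fun j _ => (hInt_inner i j x).mul_const (w j))]
    have h2 : ∀ y : Fin (d c) → ℝ,
        (∑ j : NNIdx c d, (dlogp c d θ x y i * dlogp c d θ x y j * modelPdf c d θ x y) * w j)
          = (dlogp c d θ x y i * modelPdf c d θ x y)
              * ∑ j : NNIdx c d, w j * dlogp c d θ x y j := by
      intro y
      rw [Finset.mul_sum]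
      exact Finset.sum_congr rfl fun j _ => by ring
    calc (∫ y : Fin (d c) → ℝ, ∑ j : NNIdx c d,
            (dlogp c d θ x y i * dlogp c d θ x y j * modelPdf c d θ x y) * w j)
        = ∫ _y : Fin (d c) → ℝ, (0 : ℝ) := by
          refine integral_congr_ae (Filter.Eventually.of_forall fun y => ?_)
          beta_reduce
          rw [h2 y, hw x y, mul_zero]
      _ = 0 := integral_zero _ _
  have h3 : ∀ j : NNIdx c d, fisher c d θ q i j * w j
      = ∫ x : Fin (d 0) → ℝ, ((∫ y : Fin (d c) → ℝ,
          dlogp c d θ x y i * dlogp c d θ x y j * modelPdf c d θ x y) * q x) * w j :=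
    fun j => (integral_mul_const (w j) _).symm
  rw [Finset.sum_congr rfl fun j _ => h3 j,
    ← integral_finset_sum Finset.univ (fun j _ => (hInt_outer i j).mul_const (w j))]
  calc (∫ x : Fin (d 0) → ℝ, ∑ j : NNIdx c d, ((∫ y : Fin (d c) → ℝ,
          dlogp c d θ x y i * dlogp c d θ x y j * modelPdf c d θ x y) * q x) * w j)
      = ∫ _x : Fin (d 0) → ℝ, (0 : ℝ) := by
        refine integral_congr_ae (Filter.Eventually.of_forall fun x => ?_)
        beta_reduce
        have h4 : ∀ j : NNIdx c d, ((∫ y : Fin (d c) → ℝ,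
              dlogp c d θ x y i * dlogp c d θ x y j * modelPdf c d θ x y) * q x) * w j
            = ((∫ y : Fin (d c) → ℝ,
              dlogp c d θ x y i * dlogp c d θ x y j * modelPdf c d θ x y) * w j) * q x :=
          fun j => by ring
        rw [Finset.sum_congr rfl fun j _ => h4 j, ← Finset.sum_mul, key x, zero_mul]
    _ = 0 := integral_zero _ _

/-- If some weight or bias incident to a hidden node of a ReLU network of depth `c > 1`
is nonzero, then the Fisher information matrix `I(θ)` is degenerate: there is a nonzero
vector `v` with `I(θ) v = 0`. -/
theorem relu_fisher_degenerate
    (c : ℕ) (hc : 1 < c) (d : ℕ → ℕ) (θ : NNIdx c d → ℝ)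
    (q : (Fin (d 0) → ℝ) → ℝ)
    (hInt_inner : ∀ (i j : NNIdx c d) (x : Fin (d 0) → ℝ),
      Integrable (fun y : Fin (d c) → ℝ =>
        dlogp c d θ x y i * dlogp c d θ x y j * modelPdf c d θ x y))
    (hInt_outer : ∀ i j : NNIdx c d,
      Integrable (fun x : Fin (d 0) → ℝ =>
        (∫ y : Fin (d c) → ℝ,
          dlogp c d θ x y i * dlogp c d θ x y j * modelPdf c d θ x y) * q x))
    (hnz : ∃ (l : ℕ) (hl : l + 1 < c) (j : Fin (d (l + 1))),
      (∃ k : Fin (d l), θ (Sum.inl ⟨⟨l, Nat.lt_of_succ_lt hl⟩, (j, k)⟩) ≠ 0) ∨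
      θ (Sum.inr ⟨⟨l, Nat.lt_of_succ_lt hl⟩, j⟩) ≠ 0 ∨
      (∃ i : Fin (d (l + 1 + 1)), θ (Sum.inl ⟨⟨l + 1, hl⟩, (i, j)⟩) ≠ 0)) :
    ∃ v : NNIdx c d → ℝ, v ≠ 0 ∧
      ∀ i : NNIdx c d, ∑ j : NNIdx c d, fisher c d θ q i j * v j = 0 := by
  classical
  obtain ⟨n, rfl⟩ : ∃ n, c = n + 2 := ⟨c - 2, by omega⟩
  have hn : n < n + 2 := by omega
  have hn1 : n + 1 < n + 2 := by omega
  by_cases hA : ∃ j : Fin (d (n+1)),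
      (∃ k : Fin (d n), θ (Sum.inl ⟨⟨n, hn⟩, (j, k)⟩) ≠ 0) ∨
      θ (Sum.inr ⟨⟨n, hn⟩, j⟩) ≠ 0 ∨
      (∃ m : Fin (d (n+2)), θ (Sum.inl ⟨⟨n+1, hn1⟩, (m, j)⟩) ≠ 0)
  · -- Case A: some parameter incident to a last-hidden-layer neuron is nonzero
    obtain ⟨j, hj⟩ := hA
    set v : NNIdx (n+2) d → ℝ :=
      (∑ k : Fin (d n), Pi.single (Sum.inl ⟨⟨n, hn⟩, (j, k)⟩ : NNIdx (n+2) d)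
        (θ (Sum.inl ⟨⟨n, hn⟩, (j, k)⟩)))
      + Pi.single (Sum.inr ⟨⟨n, hn⟩, j⟩ : NNIdx (n+2) d) (θ (Sum.inr ⟨⟨n, hn⟩, j⟩))
      - ∑ m : Fin (d (n+2)), Pi.single (Sum.inl ⟨⟨n+1, hn1⟩, (m, j)⟩ : NNIdx (n+2) d)
        (θ (Sum.inl ⟨⟨n+1, hn1⟩, (m, j)⟩)) with hv
    have hv_in : ∀ k₀ : Fin (d n),
        v (Sum.inl ⟨⟨n, hn⟩, (j, k₀)⟩) = θ (Sum.inl ⟨⟨n, hn⟩, (j, k₀)⟩) := by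
      intro k₀
      rw [hv]
      simp only [Pi.add_apply, Pi.sub_apply, Finset.sum_apply]
      have e1 : ∑ k : Fin (d n), (Pi.single (Sum.inl ⟨⟨n, hn⟩, (j, k)⟩)
            (θ (Sum.inl ⟨⟨n, hn⟩, (j, k)⟩)) : NNIdx (n+2) d → ℝ) (Sum.inl ⟨⟨n, hn⟩, (j, k₀)⟩)
          = θ (Sum.inl ⟨⟨n, hn⟩, (j, k₀)⟩) := by
        refine (Finset.sum_eq_single_of_mem k₀ (Finset.mem_univ k₀) ?_).trans
          (Pi.single_eq_same _ _)
        intro k _ hk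
        exact Pi.single_eq_of_ne (fun he => hk (by simpa [Fin.val_inj] using he.symm)) _
      have e2 : (Pi.single (Sum.inr ⟨⟨n, hn⟩, j⟩)
            (θ (Sum.inr ⟨⟨n, hn⟩, j⟩)) : NNIdx (n+2) d → ℝ) (Sum.inl ⟨⟨n, hn⟩, (j, k₀)⟩) = 0 :=
        Pi.single_eq_of_ne (by simp) _
      have e3 : ∑ m : Fin (d (n+2)), (Pi.single (Sum.inl ⟨⟨n+1, hn1⟩, (m, j)⟩)
            (θ (Sum.inl ⟨⟨n+1, hn1⟩, (m, j)⟩)) : NNIdx (n+2) d → ℝ) (Sum.inl ⟨⟨n, hn⟩, (j, k₀)⟩) = 0 :=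
        Finset.sum_eq_zero fun m _ => Pi.single_eq_of_ne (by simp [Fin.ext_iff]) _
      rw [e1, e2, e3]
      ring
    have hv_b : v (Sum.inr ⟨⟨n, hn⟩, j⟩) = θ (Sum.inr ⟨⟨n, hn⟩, j⟩) := by
      rw [hv]
      simp only [Pi.add_apply, Pi.sub_apply, Finset.sum_apply]
      have e1 : ∑ k : Fin (d n), (Pi.single (Sum.inl ⟨⟨n, hn⟩, (j, k)⟩)
            (θ (Sum.inl ⟨⟨n, hn⟩, (j, k)⟩)) : NNIdx (n+2) d → ℝ) (Sum.inr ⟨⟨n, hn⟩, j⟩) = 0 :=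
        Finset.sum_eq_zero fun k _ => Pi.single_eq_of_ne (by simp) _
      have e3 : ∑ m : Fin (d (n+2)), (Pi.single (Sum.inl ⟨⟨n+1, hn1⟩, (m, j)⟩)
            (θ (Sum.inl ⟨⟨n+1, hn1⟩, (m, j)⟩)) : NNIdx (n+2) d → ℝ) (Sum.inr ⟨⟨n, hn⟩, j⟩) = 0 :=
        Finset.sum_eq_zero fun m _ => Pi.single_eq_of_ne (by simp) _
      rw [e1, e3, Pi.single_eq_same]
      ring
    have hv_out : ∀ m₀ : Fin (d (n+2)),
        v (Sum.inl ⟨⟨n+1, hn1⟩, (m₀, j)⟩) = -θ (Sum.inl ⟨⟨n+1, hn1⟩, (m₀, j)⟩) := by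
      intro m₀
      rw [hv]
      simp only [Pi.add_apply, Pi.sub_apply, Finset.sum_apply]
      have e1 : ∑ k : Fin (d n), (Pi.single (Sum.inl ⟨⟨n, hn⟩, (j, k)⟩)
            (θ (Sum.inl ⟨⟨n, hn⟩, (j, k)⟩)) : NNIdx (n+2) d → ℝ) (Sum.inl ⟨⟨n+1, hn1⟩, (m₀, j)⟩) = 0 :=
        Finset.sum_eq_zero fun k _ => Pi.single_eq_of_ne (by simp [Fin.ext_iff]) _
      have e2 : (Pi.single (Sum.inr ⟨⟨n, hn⟩, j⟩)
            (θ (Sum.inr ⟨⟨n, hn⟩, j⟩)) : NNIdx (n+2) d → ℝ) (Sum.inl ⟨⟨n+1, hn1⟩, (m₀, j)⟩) = 0 :=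
        Pi.single_eq_of_ne (by simp) _
      have e3 : ∑ m : Fin (d (n+2)), (Pi.single (Sum.inl ⟨⟨n+1, hn1⟩, (m, j)⟩)
            (θ (Sum.inl ⟨⟨n+1, hn1⟩, (m, j)⟩)) : NNIdx (n+2) d → ℝ) (Sum.inl ⟨⟨n+1, hn1⟩, (m₀, j)⟩)
          = θ (Sum.inl ⟨⟨n+1, hn1⟩, (m₀, j)⟩) := by
        refine (Finset.sum_eq_single_of_mem m₀ (Finset.mem_univ m₀) ?_).trans
          (Pi.single_eq_same _ _)
        intro m _ hm
        exact Pi.single_eq_of_ne (fun he => hm (by simpa [Fin.val_inj] using he.symm)) _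
      rw [e1, e2, e3]
      ring
    refine ⟨v, ?_, ?_⟩
    · intro h0
      rcases hj with ⟨k, hk⟩ | hb | ⟨m, hm⟩
      · exact hk (by rw [← hv_in k, h0]; rfl)
      · exact hb (by rw [← hv_b, h0]; rfl)
      · apply hm
        have := congrFun h0 (Sum.inl ⟨⟨n+1, hn1⟩, (m, j)⟩)
        rw [hv_out m] at this
        simpa using this.symm
    · apply fisher_combo (n+2) d θ q hInt_inner hInt_outer
      intro x y
      have hsingle : ∀ (a : NNIdx (n+2) d) (cc : ℝ),
          ∑ idx : NNIdx (n+2) d, (Pi.single a cc : NNIdx (n+2) d → ℝ) idx * dlogp (n+2) d θ x y idx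
            = cc * dlogp (n+2) d θ x y a := by
        intro a cc
        have hterm : ∀ idx : NNIdx (n+2) d,
            (Pi.single a cc : NNIdx (n+2) d → ℝ) idx * dlogp (n+2) d θ x y idx
              = (if idx = a then cc * dlogp (n+2) d θ x y idx else 0) := fun idx => by
          by_cases h : idx = a
          · subst h; rw [Pi.single_eq_same, if_pos rfl]
          · rw [Pi.single_eq_of_ne h, if_neg h, zero_mul]
        rw [Finset.sum_congr rfl fun idx _ => hterm idx,
          Finset.sum_ite_eq' Finset.univ a (fun idx => cc * dlogp (n+2) d θ x y idx)]
        simp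
      have hsplit : ∑ idx : NNIdx (n+2) d, v idx * dlogp (n+2) d θ x y idx
          = (∑ k : Fin (d n), θ (Sum.inl ⟨⟨n, hn⟩, (j, k)⟩)
              * dlogp (n+2) d θ x y (Sum.inl ⟨⟨n, hn⟩, (j, k)⟩))
            + θ (Sum.inr ⟨⟨n, hn⟩, j⟩) * dlogp (n+2) d θ x y (Sum.inr ⟨⟨n, hn⟩, j⟩)
            - ∑ m : Fin (d (n+2)), θ (Sum.inl ⟨⟨n+1, hn1⟩, (m, j)⟩)
              * dlogp (n+2) d θ x y (Sum.inl ⟨⟨n+1, hn1⟩, (m, j)⟩) := by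
        rw [hv]
        simp only [Pi.add_apply, Pi.sub_apply, Finset.sum_apply, add_mul, sub_mul]
        rw [Finset.sum_sub_distrib, Finset.sum_add_distrib]
        congr 1
        · congr 1
          · rw [Finset.sum_congr rfl fun idx _ => by rw [Finset.sum_mul],
              Finset.sum_comm]
            exact Finset.sum_congr rfl fun k _ => hsingle _ _
          · exact hsingle _ _
        · rw [Finset.sum_congr rfl fun idx _ => by rw [Finset.sum_mul],
            Finset.sum_comm]
          exact Finset.sum_congr rfl fun m _ => hsingle _ _
      rw [hsplit]
      exact key_pointwise n d θ x y hn hn1 j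
  · -- Case B: the whole last hidden layer is dead
    push_neg at hA
    obtain ⟨l, hl, j, -⟩ := hnz
    set idx₀ : NNIdx (n+2) d := Sum.inr ⟨⟨l, Nat.lt_of_succ_lt hl⟩, j⟩ with hidx₀
    have hdl : ∀ (x : Fin (d 0) → ℝ) (y : Fin (d (n+2)) → ℝ),
        dlogp (n+2) d θ x y idx₀ = 0 := by
      intro x y
      have hnetB : ∀ (s : ℝ) (m : Fin (d (n+2))),
          netFun (n+2) d (Function.update θ idx₀ s) x m = θ (Sum.inr ⟨⟨n+1, hn1⟩, m⟩) := by
        intro s m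
        show act (n+2) d _ x (n+2) m = _
        rw [act_top n d _ x hn1 m]
        have hzero : ∀ j' : Fin (d (n+1)),
            Function.update θ idx₀ s (Sum.inl ⟨⟨n+1, hn1⟩, (m, j')⟩)
              * act (n+2) d (Function.update θ idx₀ s) x (n+1) j' = 0 := by
          intro j'
          rw [Function.update_of_ne (by simp [hidx₀]), (hA j').2.2 m, zero_mul]
        rw [Finset.sum_eq_zero fun j' _ => hzero j', zero_add,
          Function.update_of_ne (by
            simp only [hidx₀, ne_eq, Sum.inr.injEq]
            intro h
            have := congrArg (fun t => (Sigma.fst t).val) h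
            simp at this
            omega)]
      unfold dlogp
      have hconst : (fun s => Real.log (modelPdf (n+2) d (Function.update θ idx₀ s) x y))
          = fun _ => Real.log ((2 * Real.pi) ^ (-(d (n+2) : ℝ) / 2) *
              Real.exp (-(1/2) * ∑ m : Fin (d (n+2)),
                (y m - θ (Sum.inr ⟨⟨n+1, hn1⟩, m⟩)) ^ 2)) := by
        funext s
        have hs : ∑ m : Fin (d (n+2)),
            (y m - netFun (n+2) d (Function.update θ idx₀ s) x m) ^ 2
            = ∑ m : Fin (d (n+2)), (y m - θ (Sum.inr ⟨⟨n+1, hn1⟩, m⟩)) ^ 2 :=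
          Finset.sum_congr rfl fun m _ => by rw [hnetB s m]
        rw [modelPdf, hs]
      rw [hconst, deriv_const]
    refine ⟨Pi.single idx₀ 1, ?_, ?_⟩
    · intro h0
      have := congrFun h0 idx₀
      simp at this
    · intro i
      rw [Fintype.sum_eq_single idx₀
        (fun b hb => by rw [Pi.single_eq_of_ne hb, mul_zero]),
        Pi.single_eq_same, mul_one]
      show (∫ x : Fin (d 0) → ℝ, (∫ y : Fin (d (n+2)) → ℝ,
        dlogp (n+2) d θ x y i * dlogp (n+2) d θ x y idx₀ * modelPdf (n+2) d θ x y) * q x) = 0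
      simp [hdl]
end

section
/- Let N > 0 and define G(b) = ∫_{−N}^{N} (ReLU(x − b) − ReLU(x))² dx, where ReLU(t) = max(t, 0). Then for every b with 0 ≤ b ≤ N, G(b) = −(2/3)b³ + N b². -/
/-- For `N > 0` and `0 ≤ b ≤ N`,
`∫_{-N}^{N} (ReLU(x - b) - ReLU(x))² dx = -(2/3) b³ + N b²`. -/
theorem relu_kl_integral_right (N b : ℝ) (hN : 0 < N) (hb0 : 0 ≤ b) (hbN : b ≤ N) :
    (∫ x in (-N)..N, (max (x - b) 0 - max x 0) ^ 2)
      = -(2 / 3) * b ^ 3 + N * b ^ 2 := by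
  have hcont : Continuous fun x : ℝ => (max (x - b) 0 - max x 0) ^ 2 := by
    fun_prop
  have hI : ∀ u v : ℝ, IntervalIntegrable
      (fun x : ℝ => (max (x - b) 0 - max x 0) ^ 2) MeasureTheory.volume u v :=
    fun u v => hcont.intervalIntegrable u v
  have hsplit1 : (∫ x in (-N)..N, (max (x - b) 0 - max x 0) ^ 2)
      = (∫ x in (-N)..(0:ℝ), (max (x - b) 0 - max x 0) ^ 2)
        + ∫ x in (0:ℝ)..N, (max (x - b) 0 - max x 0) ^ 2 :=
    (intervalIntegral.integral_add_adjacent_intervals (hI _ _) (hI _ _)).symm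
  have hsplit2 : (∫ x in (0:ℝ)..N, (max (x - b) 0 - max x 0) ^ 2)
      = (∫ x in (0:ℝ)..b, (max (x - b) 0 - max x 0) ^ 2)
        + ∫ x in b..N, (max (x - b) 0 - max x 0) ^ 2 :=
    (intervalIntegral.integral_add_adjacent_intervals (hI _ _) (hI _ _)).symm
  have h1 : (∫ x in (-N)..(0:ℝ), (max (x - b) 0 - max x 0) ^ 2) = 0 := by
    rw [intervalIntegral.integral_congr (g := fun _ => (0:ℝ))]
    · simp
    · intro x hx
      rw [Set.uIcc_of_le (by linarith)] at hx
      obtain ⟨hx1, hx2⟩ := hx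
      have h1 : max (x - b) 0 = 0 := max_eq_right (by linarith)
      have h2 : max x 0 = 0 := max_eq_right hx2
      simp [h1, h2]
  have h2 : (∫ x in (0:ℝ)..b, (max (x - b) 0 - max x 0) ^ 2)
      = ∫ x in (0:ℝ)..b, x ^ 2 := by
    apply intervalIntegral.integral_congr
    intro x hx
    rw [Set.uIcc_of_le hb0] at hx
    obtain ⟨hx1, hx2⟩ := hx
    have h1 : max (x - b) 0 = 0 := max_eq_right (by linarith)
    have h2 : max x 0 = x := max_eq_left hx1
    simp [h1, h2]
  have h3 : (∫ x in b..N, (max (x - b) 0 - max x 0) ^ 2)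
      = ∫ x in b..N, b ^ 2 := by
    apply intervalIntegral.integral_congr
    intro x hx
    rw [Set.uIcc_of_le hbN] at hx
    obtain ⟨hx1, hx2⟩ := hx
    have h1 : max (x - b) 0 = x - b := max_eq_left (by linarith)
    have h2 : max x 0 = x := max_eq_left (by linarith)
    simp only [h1, h2]
    ring
  have h2' : (∫ x in (0:ℝ)..b, x ^ 2) = b ^ 3 / 3 := by
    simp [integral_pow]
    norm_num
  have h3' : (∫ x in b..N, (b:ℝ) ^ 2) = (N - b) * b ^ 2 := by
    simp [mul_comm]
  rw [hsplit1, hsplit2, h1, h2, h3, h2', h3']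
  ring
end

section
/- Let d ≥ d′ ≥ 1, let c_1, …, c_{d′} > 0, define K : ℝ^d → ℝ by K(w) = Σ_{i=1}^{d′} c_i w_i², fix r > 0, and let V(t) denote the Lebesgue volume of { w ∈ ℝ^d : ‖w‖ ≤ r and K(w) < t }. Then for every a > 0 with a ≠ 1, 2 · lim_{t → 0⁺} [ log( V(at) / V(t) ) / log(a) ] = d′. -/
open MeasureTheory Set Filter

noncomputable def Dmap (d d' : ℕ) (s : ℝ) : (Fin d → ℝ) →ₗ[ℝ] (Fin d → ℝ) :=
  Matrix.toLin' (Matrix.diagonal fun i : Fin d => if (i : ℕ) < d' then s else 1)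

lemma Dmap_apply (d d' : ℕ) (s : ℝ) (w : Fin d → ℝ) (i : Fin d) :
    Dmap d d' s w i = (if (i:ℕ) < d' then s else 1) * w i := by
  simp [Dmap, Matrix.toLin'_apply, Matrix.mulVec_diagonal]

lemma card_filter_lt (d d' : ℕ) (hdd : d' ≤ d) :
    (Finset.univ.filter fun i : Fin d => (i:ℕ) < d').card = d' := by
  have : (Finset.univ.filter fun i : Fin d => (i:ℕ) < d')
      = Finset.map (Fin.castLEEmb hdd) Finset.univ := by
    ext i
    simp only [Finset.mem_filter, Finset.mem_univ, true_and, Finset.mem_map,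
      Fin.castLEEmb_apply]
    constructor
    · intro h; exact ⟨⟨i, h⟩, Fin.ext rfl⟩
    · rintro ⟨j, rfl⟩; simpa using j.2
  rw [this, Finset.card_map, Finset.card_univ, Fintype.card_fin]

lemma Dmap_det (d d' : ℕ) (hdd : d' ≤ d) (s : ℝ) :
    LinearMap.det (Dmap d d' s) = s ^ d' := by
  rw [Dmap, LinearMap.det_toLin', Matrix.det_diagonal, Finset.prod_ite,
    Finset.prod_const, Finset.prod_const, one_pow, mul_one, card_filter_lt d d' hdd]

lemma Dmap_norm_mono (d d' : ℕ) {s₁ s₂ : ℝ} (h0 : 0 ≤ s₁) (h : s₁ ≤ s₂) (u : Fin d → ℝ) :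
    ‖Dmap d d' s₁ u‖ ≤ ‖Dmap d d' s₂ u‖ := by
  rw [pi_norm_le_iff_of_nonneg (norm_nonneg _)]
  intro i
  calc ‖Dmap d d' s₁ u i‖ ≤ ‖Dmap d d' s₂ u i‖ := by
        rw [Dmap_apply, Dmap_apply, Real.norm_eq_abs, Real.norm_eq_abs, abs_mul, abs_mul]
        gcongr
        split
        · exact h
        · exact le_rfl
    _ ≤ ‖Dmap d d' s₂ u‖ := norm_le_pi_norm _ i

lemma Dmap_norm_le (d d' : ℕ) {s : ℝ} (h0 : 0 ≤ s) (u : Fin d → ℝ) :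
    ‖Dmap d d' s u‖ ≤ (s + 1) * ‖u‖ := by
  rw [pi_norm_le_iff_of_nonneg (by positivity)]
  intro i
  rw [Dmap_apply, Real.norm_eq_abs, abs_mul]
  have h1 : |u i| ≤ ‖u‖ := by
    simpa [Real.norm_eq_abs] using norm_le_pi_norm u i
  have h2 : |if (i:ℕ) < d' then s else 1| ≤ s + 1 := by
    split
    · rw [abs_of_nonneg h0]; linarith
    · rw [abs_one]; linarith
  exact mul_le_mul h2 h1 (abs_nonneg _) (by positivity)

section Main
variable (d d' : ℕ) (hdd : d' ≤ d) (c : Fin d' → ℝ) (r : ℝ)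

def Sset (t : ℝ) : Set (Fin d → ℝ) :=
  {w | ‖w‖ ≤ r ∧ ∑ i : Fin d', c i * w (Fin.castLE hdd i) ^ 2 < t}

def Aset (t : ℝ) : Set (Fin d → ℝ) :=
  {u | ‖Dmap d d' (Real.sqrt t) u‖ ≤ r ∧ ∑ i : Fin d', c i * u (Fin.castLE hdd i) ^ 2 < 1}

lemma preimage_eq {t : ℝ} (ht : 0 < t) :
    (Dmap d d' (Real.sqrt t)) ⁻¹' (Sset d d' hdd c r t) = Aset d d' hdd c r t := by
  ext u
  simp only [Sset, Aset, Set.mem_preimage, Set.mem_setOf_eq]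
  have hkey : ∀ i : Fin d', Dmap d d' (Real.sqrt t) u (Fin.castLE hdd i)
      = Real.sqrt t * u (Fin.castLE hdd i) := by
    intro i
    rw [Dmap_apply]
    simp [i.2]
  have hsum : ∑ i : Fin d', c i * ((Dmap d d' (Real.sqrt t)) u (Fin.castLE hdd i)) ^ 2
      = t * ∑ i : Fin d', c i * u (Fin.castLE hdd i) ^ 2 := by
    rw [Finset.mul_sum]
    refine Finset.sum_congr rfl fun i _ => ?_
    rw [hkey i, mul_pow, Real.sq_sqrt ht.le]; ring
  constructor
  · rintro ⟨h1, h2⟩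
    refine ⟨h1, ?_⟩
    rw [hsum] at h2
    have h2' : t * (∑ i : Fin d', c i * u (Fin.castLE hdd i) ^ 2) < t * 1 := by
      simpa using h2
    exact (mul_lt_mul_iff_right₀ ht).mp h2'
  · rintro ⟨h1, h2⟩
    refine ⟨h1, ?_⟩
    rw [hsum]
    calc t * ∑ i : Fin d', c i * u (Fin.castLE hdd i) ^ 2 < t * 1 :=
          (mul_lt_mul_iff_right₀ ht).mpr h2
      _ = t := mul_one t

lemma vol_Sset_ne_top (t : ℝ) : volume (Sset d d' hdd c r t) ≠ ⊤ := by
  have hsub : Sset d d' hdd c r t ⊆ Metric.closedBall 0 r := fun w hw => by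
    simpa [mem_closedBall_zero_iff] using hw.1
  exact ((measure_mono hsub).trans_lt (measure_closedBall_lt_top)).ne

lemma vol_Sset_eq {t : ℝ} (ht : 0 < t) :
    volume (Sset d d' hdd c r t)
      = ENNReal.ofReal (Real.sqrt t ^ d') * volume (Aset d d' hdd c r t) := by
  have hst : 0 < Real.sqrt t := Real.sqrt_pos.mpr ht
  have hp : 0 < Real.sqrt t ^ d' := pow_pos hst _
  have hdet : LinearMap.det (Dmap d d' (Real.sqrt t)) = Real.sqrt t ^ d' :=
    Dmap_det d d' hdd _
  have h := Measure.addHaar_preimage_linearMap (volume : Measure (Fin d → ℝ))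
    (by rw [hdet]; exact hp.ne') (Sset d d' hdd c r t)
  rw [preimage_eq d d' hdd c r ht, hdet, abs_of_pos (inv_pos.mpr hp)] at h
  rw [h, ← mul_assoc, ← ENNReal.ofReal_mul hp.le, mul_inv_cancel₀ hp.ne',
    ENNReal.ofReal_one, one_mul]

lemma vol_Aset_ne_top {t : ℝ} (ht : 0 < t) :
    volume (Aset d d' hdd c r t) ≠ ⊤ := by
  have h := Measure.addHaar_preimage_linearMap (volume : Measure (Fin d → ℝ))
    (show LinearMap.det (Dmap d d' (Real.sqrt t)) ≠ 0 by
      rw [Dmap_det d d' hdd]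
      exact (pow_pos (Real.sqrt_pos.mpr ht) _).ne') (Sset d d' hdd c r t)
  rw [preimage_eq d d' hdd c r ht] at h
  rw [h]
  exact ENNReal.mul_ne_top ENNReal.ofReal_ne_top (vol_Sset_ne_top d d' hdd c r t)

lemma vol_Aset_pos (hc : ∀ i, 0 < c i) (hr : 0 < r) {t : ℝ} (ht : 0 < t) :
    0 < volume (Aset d d' hdd c r t) := by
  set s := Real.sqrt t with hs
  have hs0 : 0 ≤ s := Real.sqrt_nonneg t
  set C := ∑ i : Fin d', c i with hC
  have hC0 : 0 ≤ C := Finset.sum_nonneg fun i _ => (hc i).le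
  set ε0 : ℝ := (C + 1)⁻¹ with hε0
  have hε0pos : 0 < ε0 := by positivity
  have hε0le : ε0 ≤ 1 := by
    rw [hε0]
    rw [inv_le_one_iff₀]
    right; linarith
  set ε : ℝ := min (r / (s + 1)) ε0 with hε
  have hεpos : 0 < ε := lt_min (by positivity) hε0pos
  refine lt_of_lt_of_le (Metric.measure_closedBall_pos volume (0 : Fin d → ℝ) hεpos)
    (measure_mono ?_)
  intro u hu
  rw [Metric.mem_closedBall, dist_zero_right] at hu
  constructor
  · calc ‖Dmap d d' s u‖ ≤ (s + 1) * ‖u‖ := Dmap_norm_le d d' hs0 u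
      _ ≤ (s + 1) * (r / (s + 1)) := by
          gcongr
          exact hu.trans (min_le_left _ _)
      _ = r := by field_simp
  · have hui : ∀ i : Fin d', u (Fin.castLE hdd i) ^ 2 ≤ ε0 ^ 2 := by
      intro i
      have h1 : |u (Fin.castLE hdd i)| ≤ ε0 := by
        calc |u (Fin.castLE hdd i)| ≤ ‖u‖ := by
              simpa [Real.norm_eq_abs] using norm_le_pi_norm u (Fin.castLE hdd i)
          _ ≤ ε0 := hu.trans (min_le_right _ _)
      calc u (Fin.castLE hdd i) ^ 2 = |u (Fin.castLE hdd i)| ^ 2 := (sq_abs _).symm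
        _ ≤ ε0 ^ 2 := by gcongr
    calc ∑ i : Fin d', c i * u (Fin.castLE hdd i) ^ 2
        ≤ ∑ i : Fin d', c i * ε0 ^ 2 :=
          Finset.sum_le_sum fun i _ => by
            have := hui i
            nlinarith [(hc i).le]
      _ = C * ε0 ^ 2 := by rw [← Finset.sum_mul]
      _ ≤ C * ε0 := by
          have : ε0 ^ 2 ≤ ε0 := by nlinarith
          nlinarith
      _ < (C + 1) * ε0 := by nlinarith
      _ = 1 := by rw [hε0]; field_simp

lemma Aset_antitone {t₁ t₂ : ℝ} (h : t₁ ≤ t₂) :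
    Aset d d' hdd c r t₂ ⊆ Aset d d' hdd c r t₁ := by
  intro u hu
  exact ⟨le_trans (Dmap_norm_mono d d' (Real.sqrt_nonneg _)
    (Real.sqrt_le_sqrt h) u) hu.1, hu.2⟩

lemma Aset_subset_ball (hc : ∀ i, 0 < c i) (hr : 0 < r) (t : ℝ) :
    Aset d d' hdd c r t ⊆
      Metric.closedBall 0 (max r (∑ j : Fin d', Real.sqrt (c j)⁻¹)) := by
  intro u hu
  obtain ⟨h1, h2⟩ := hu
  rw [Metric.mem_closedBall, dist_zero_right]
  rw [pi_norm_le_iff_of_nonneg (le_max_of_le_left hr.le)]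
  intro i
  rw [Real.norm_eq_abs]
  by_cases h : (i : ℕ) < d'
  · refine le_max_of_le_right ?_
    set j : Fin d' := ⟨i, h⟩ with hj
    have hcast : Fin.castLE hdd j = i := Fin.ext rfl
    have hsingle : c j * u i ^ 2 ≤ ∑ i' : Fin d', c i' * u (Fin.castLE hdd i') ^ 2 := by
      have := Finset.single_le_sum
        (f := fun i' : Fin d' => c i' * u (Fin.castLE hdd i') ^ 2)
        (fun i' _ => mul_nonneg (hc i').le (sq_nonneg _)) (Finset.mem_univ j)
      simpa [hcast] using this
    have hmul : c j * u i ^ 2 < 1 := hsingle.trans_lt h2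
    have hlt : u i ^ 2 ≤ (c j)⁻¹ := by
      rw [inv_eq_one_div, le_div_iff₀ (hc j)]
      nlinarith
    calc |u i| ≤ Real.sqrt ((c j)⁻¹) := by
          rw [Real.le_sqrt (abs_nonneg _) (inv_nonneg.mpr (hc j).le), sq_abs]
          exact hlt
      _ ≤ ∑ j' : Fin d', Real.sqrt ((c j')⁻¹) :=
          Finset.single_le_sum (f := fun j' : Fin d' => Real.sqrt ((c j')⁻¹))
            (fun j' _ => Real.sqrt_nonneg _) (Finset.mem_univ j)
  · refine le_max_of_le_left ?_
    have : |u i| = ‖Dmap d d' (Real.sqrt t) u i‖ := by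
      rw [Dmap_apply, if_neg h, one_mul, Real.norm_eq_abs]
    rw [this]
    exact (norm_le_pi_norm _ i).trans h1

end Main

/-- Volume codimension: for `K(w) = Σ_{i=1}^{d'} c_i w_i²` on `ℝ^d` (`d' ≤ d`) and
`V(t)` the volume of `{‖w‖ ≤ r, K(w) < t}`, for every `a > 0`, `a ≠ 1` we have
`2 · lim_{t→0⁺} log(V(at)/V(t))/log(a) = d'`. -/
theorem volume_codimension (d d' : ℕ) (hd' : 1 ≤ d') (hdd : d' ≤ d)
    (c : Fin d' → ℝ) (hc : ∀ i, 0 < c i) (r : ℝ) (hr : 0 < r)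
    (a : ℝ) (ha : 0 < a) (ha1 : a ≠ 1) :
    Filter.Tendsto
      (fun t : ℝ => 2 *
        (Real.log
            ((volume {w : Fin d → ℝ | ‖w‖ ≤ r ∧
                ∑ i : Fin d', c i * w (Fin.castLE hdd i) ^ 2 < a * t}).toReal /
              (volume {w : Fin d → ℝ | ‖w‖ ≤ r ∧
                ∑ i : Fin d', c i * w (Fin.castLE hdd i) ^ 2 < t}).toReal) /
          Real.log a))
      (nhdsWithin 0 (Set.Ioi 0)) (nhds (d' : ℝ)) := by
  have hlog : Real.log a ≠ 0 := Real.log_ne_zero_of_pos_of_ne_one ha ha1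
  set G : ℝ → ℝ := fun t => (volume (Aset d d' hdd c r t)).toReal with hG
  set V : ℝ → ℝ := fun t => (volume (Sset d d' hdd c r t)).toReal with hV
  -- G is antitone on Ioi 0
  have hGanti : AntitoneOn G (Set.Ioi 0) := by
    intro x hx y _ hxy
    exact ENNReal.toReal_mono (vol_Aset_ne_top d d' hdd c r hx)
      (measure_mono (Aset_antitone d d' hdd c r hxy))
  have hbdd : BddAbove (G '' Set.Ioi 0) := by
    refine ⟨(volume (Metric.closedBall (0 : Fin d → ℝ)
      (max r (∑ j : Fin d', Real.sqrt (c j)⁻¹)))).toReal, ?_⟩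
    rintro x ⟨t, _, rfl⟩
    exact ENNReal.toReal_mono (measure_closedBall_lt_top).ne
      (measure_mono (Aset_subset_ball d d' hdd c r hc hr t))
  set L := sSup (G '' Set.Ioi 0) with hLdef
  have hlim : Filter.Tendsto G (nhdsWithin 0 (Set.Ioi 0)) (nhds L) :=
    AntitoneOn.tendsto_nhdsGT hGanti hbdd
  have hG1pos : 0 < G 1 :=
    ENNReal.toReal_pos (vol_Aset_pos d d' hdd c r hc hr one_pos).ne'
      (vol_Aset_ne_top d d' hdd c r one_pos)
  have hLpos : 0 < L :=
    lt_of_lt_of_le hG1pos (le_csSup hbdd ⟨1, Set.mem_Ioi.mpr one_pos, rfl⟩)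
  -- t ↦ a*t maps 𝓝[>]0 to 𝓝[>]0
  have hmul : Filter.Tendsto (fun t : ℝ => a * t) (nhdsWithin 0 (Set.Ioi 0))
      (nhdsWithin 0 (Set.Ioi 0)) := by
    refine tendsto_nhdsWithin_of_tendsto_nhds_of_eventually_within _ ?_ ?_
    · have : Filter.Tendsto (fun t : ℝ => a * t) (nhds 0) (nhds (a * 0)) :=
        (continuous_const.mul continuous_id).tendsto 0
      rw [mul_zero] at this
      exact this.mono_left nhdsWithin_le_nhds
    · filter_upwards [self_mem_nhdsWithin] with t ht
      exact Set.mem_Ioi.mpr (mul_pos ha ht)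
  have hGa : Filter.Tendsto (fun t => G (a * t)) (nhdsWithin 0 (Set.Ioi 0)) (nhds L) :=
    hlim.comp hmul
  have hlogG : Filter.Tendsto (fun t => Real.log (G t)) (nhdsWithin 0 (Set.Ioi 0))
      (nhds (Real.log L)) := (Real.continuousAt_log hLpos.ne').tendsto.comp hlim
  have hlogGa : Filter.Tendsto (fun t => Real.log (G (a * t))) (nhdsWithin 0 (Set.Ioi 0))
      (nhds (Real.log L)) := (Real.continuousAt_log hLpos.ne').tendsto.comp hGa
  -- the auxiliary function
  set g : ℝ → ℝ := fun t => 2 * (((d' : ℝ) * (Real.log a / 2) +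
      (Real.log (G (a * t)) - Real.log (G t))) / Real.log a) with hg
  have hgt : Filter.Tendsto g (nhdsWithin 0 (Set.Ioi 0))
      (nhds (2 * (((d' : ℝ) * (Real.log a / 2) +
        (Real.log L - Real.log L)) / Real.log a))) := by
    exact ((((hlogGa.sub hlogG).const_add ((d' : ℝ) * (Real.log a / 2))).div_const
      (Real.log a)).const_mul 2)
  have hval : 2 * (((d' : ℝ) * (Real.log a / 2) +
      (Real.log L - Real.log L)) / Real.log a) = (d' : ℝ) := by
    rw [sub_self, add_zero]
    field_simp
  rw [hval] at hgt
  refine hgt.congr' ?_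
  filter_upwards [self_mem_nhdsWithin] with t ht
  have ht0 : 0 < t := ht
  have hat0 : 0 < a * t := mul_pos ha ht0
  -- values of V
  have key : ∀ τ : ℝ, 0 < τ → V τ = Real.sqrt τ ^ d' * G τ := by
    intro τ hτ
    show (volume (Sset d d' hdd c r τ)).toReal
      = Real.sqrt τ ^ d' * (volume (Aset d d' hdd c r τ)).toReal
    rw [vol_Sset_eq d d' hdd c r hτ, ENNReal.toReal_mul,
      ENNReal.toReal_ofReal (pow_nonneg (Real.sqrt_nonneg τ) _)]
  have hGt : 0 < G t := ENNReal.toReal_pos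
    (vol_Aset_pos d d' hdd c r hc hr ht0).ne' (vol_Aset_ne_top d d' hdd c r ht0)
  have hGat : 0 < G (a * t) := ENNReal.toReal_pos
    (vol_Aset_pos d d' hdd c r hc hr hat0).ne' (vol_Aset_ne_top d d' hdd c r hat0)
  have hst : 0 < Real.sqrt t := Real.sqrt_pos.mpr ht0
  have hsa : 0 < Real.sqrt a := Real.sqrt_pos.mpr ha
  have hVt : 0 < V t := by rw [key t ht0]; positivity
  have hVat : 0 < V (a * t) := by rw [key _ hat0]; positivity
  -- identify the target function with g
  show g t = 2 * (Real.log (V (a * t) / V t) / Real.log a)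
  have hlogVat : Real.log (V (a * t)) =
      (d' : ℝ) * (Real.log (Real.sqrt a) + Real.log (Real.sqrt t)) + Real.log (G (a * t)) := by
    rw [key _ hat0, Real.log_mul (by positivity) hGat.ne', Real.log_pow,
      Real.sqrt_mul ha.le t, Real.log_mul hsa.ne' hst.ne']
  have hlogVt : Real.log (V t) =
      (d' : ℝ) * Real.log (Real.sqrt t) + Real.log (G t) := by
    rw [key t ht0, Real.log_mul (by positivity) hGt.ne', Real.log_pow]
  rw [Real.log_div hVat.ne' hVt.ne', hlogVat, hlogVt, Real.log_sqrt ha.le]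
  ring
end
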